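/- arXiv:math/0210229 — 6 statements merged into one kernel-verified Lean document; each statement's English description precedes it below -/
import Mathlib

section
/- Let (R, m) be a Noetherian local ring with embedding dimension n ≥ 2, and let I be an m-primary ideal contained in m² such that R/I is Gorenstein. Set L = I : m. Then L² = I·L, i.e., L has reduction number one with respect to I. -/
universe u

/-- An ideal is irreducible if it is proper and is not the intersection of two
ideals properly containing it. -/
def Ideal.IsIrreducibleIdeal {R : Type*} [CommRing R] (I : Ideal R) : Prop :=
  I ≠ ⊤ ∧ ∀ J K : Ideal R, I = J ⊓ K → I = J ∨ I = K

/-- **Lemma.** Let `(R, m)` be a Noetherian local ring of embedding dimension at least two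
(i.e. `m` is not principal) and let `I ⊆ m²` be an `m`-primary ideal with `R ⧸ I`
Gorenstein (equivalently, `I` irreducible). Then `L = I : m` has reduction number one
with respect to `I`, i.e. `L² = I L`. -/
theorem socle_ideal_reduction_number_one
    {R : Type*} [CommRing R] [IsLocalRing R] [IsNoetherianRing R]
    (hembdim : ∀ a : R, Ideal.span {a} ≠ IsLocalRing.maximalIdeal R)
    (I : Ideal R) (hI2 : I ≤ IsLocalRing.maximalIdeal R ^ 2)
    (hprim : I.radical = IsLocalRing.maximalIdeal R)
    (hgor : I.IsIrreducibleIdeal)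
    (L : Ideal R) (hL : L = Submodule.colon I (IsLocalRing.maximalIdeal R)) :
    L ^ 2 = I * L := by
  classical
  set m : Ideal R := IsLocalRing.maximalIdeal R with hmdef
  have hmax : m.IsMaximal := IsLocalRing.maximalIdeal.isMaximal R
  have hmtop : m ≠ ⊤ := hmax.ne_top
  -- membership criterion for L
  have hmemL : ∀ z : R, z ∈ L ↔ ∀ p ∈ m, z * p ∈ I := by
    intro z
    rw [hL, Submodule.mem_colon]
    simp [smul_eq_mul]
  have hmbot : m ≠ ⊥ := by
    intro h
    exact hembdim 0 (by rw [Ideal.span_singleton_eq_bot.mpr rfl, h])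
  -- Nakayama
  have nak : ∀ J : Ideal R, m ≤ J ⊔ m • m → m ≤ J := by
    intro J h
    refine Submodule.le_of_le_smul_of_le_jacobson_bot (IsNoetherian.noetherian m) ?_ h
    exact le_of_eq (IsLocalRing.jacobson_eq_maximalIdeal ⊥ bot_ne_top).symm
  have hsmul : m • m = m * m := rfl
  have hm2 : I ≤ m * m := by rw [← pow_two]; exact hI2
  have hm2m : ¬ m ≤ m * m := by
    intro h
    have : m ≤ ⊥ := nak ⊥ (by rwa [bot_sup_eq, hsmul])
    exact hmbot (le_bot_iff.mp this)
  have hItop : I ≠ ⊤ := by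
    intro h
    exact hm2m fun z _ => hm2 (h ▸ Submodule.mem_top)
  -- powers of m eventually land in I
  have hpow : ∃ n, m ^ n ≤ I := by
    obtain ⟨n, hn⟩ := Ideal.exists_radical_pow_le_of_fg I (by rw [hprim]; exact IsNoetherian.noetherian m)
    exact ⟨n, by rwa [hprim] at hn⟩
  -- find x ∈ L \ I
  obtain ⟨x, hxL, hxI⟩ : ∃ x, x ∈ L ∧ x ∉ I := by
    let N₀ := Nat.find hpow
    have hN₀ : m ^ N₀ ≤ I := Nat.find_spec hpow
    have hN₀ne : N₀ ≠ 0 := by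
      intro h
      rw [h, pow_zero, Ideal.one_eq_top] at hN₀
      exact hItop (top_le_iff.mp hN₀)
    have hmin : ¬ m ^ (N₀ - 1) ≤ I := Nat.find_min hpow (by omega)
    obtain ⟨y, hy1, hy2⟩ := SetLike.not_le_iff_exists.mp hmin
    refine ⟨y, (hmemL y).mpr ?_, hy2⟩
    intro p hp
    have : y * p ∈ m ^ (N₀ - 1) * m := Ideal.mul_mem_mul hy1 hp
    have e : m ^ (N₀ - 1) * m = m ^ N₀ := by
      rw [← pow_succ]
      congr 1
      omega
    exact hN₀ (e ▸ this)
  have hIL : I ≤ L := by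
    intro i hi
    exact (hmemL i).mpr fun p hp => Ideal.mul_mem_right p _ hi
  have hLtop : L ≠ ⊤ := by
    intro h
    refine hm2m ?_
    intro p hp
    have : (1 : R) ∈ L := h ▸ Submodule.mem_top
    have := (hmemL 1).mp this p hp
    rw [one_mul] at this
    exact hm2 this
  -- units
  have hunit : ∀ c : R, c ∉ m → IsUnit c := fun c hc =>
    IsLocalRing.notMem_maximalIdeal.mp hc
  -- L = I ⊔ span {x}
  have hLspan : L = I ⊔ Ideal.span {x} := by
    refine le_antisymm ?_ (sup_le hIL ((Ideal.span_singleton_le_iff_mem L).mpr hxL))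
    intro y' hy'
    by_contra hy'n
    have hJK : I = (I ⊔ Ideal.span {x}) ⊓ (I ⊔ Ideal.span {y'}) := by
      refine le_antisymm (le_inf le_sup_left le_sup_left) ?_
      rintro z ⟨hz1, hz2⟩
      obtain ⟨i', hi', w, hw, heq⟩ := Submodule.mem_sup.mp hz2
      obtain ⟨c, hc⟩ := Ideal.mem_span_singleton'.mp hw
      by_cases hcm : c ∈ m
      · -- c * y' ∈ I since y' ∈ L
        have : y' * c ∈ I := (hmemL y').mp hy' c hcm
        have : z ∈ I := by
          rw [← heq, ← hc]
          exact I.add_mem hi' (by rwa [mul_comm])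
        exact this
      · -- c is a unit, so y' ∈ I ⊔ span {x}, contradiction
        obtain ⟨d, hd⟩ := (hunit c hcm).exists_left_inv
        have hy'mem : y' = d * (z - i') := by
          have : c * y' = z - i' := by rw [← heq, ← hc]; ring
          calc y' = (d * c) * y' := by rw [hd, one_mul]
          _ = d * (c * y') := by ring
          _ = d * (z - i') := by rw [this]
        have : z - i' ∈ I ⊔ Ideal.span {x} :=
          Submodule.sub_mem _ hz1 (Submodule.mem_sup_left hi')
        exact ((hy'n (by rw [hy'mem]; exact Ideal.mul_mem_left _ d this))).elim
    rcases hgor.2 _ _ hJK with h | h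
    · exact hxI (by
        have : x ∈ I ⊔ Ideal.span {x} := Submodule.mem_sup_right (Ideal.mem_span_singleton_self x)
        rwa [← h] at this)
    · exact hy'n (by
        have : y' ∈ I ⊔ Ideal.span {y'} := Submodule.mem_sup_right (Ideal.mem_span_singleton_self y')
        rw [← h] at this
        exact Submodule.mem_sup_left this)
  -- (*) : every ideal strictly containing I contains x
  have hstar : ∀ J : Ideal R, I ≤ J → I ≠ J → x ∈ J := by
    intro J hIJ hne
    by_contra hxJ
    have hJL : I = J ⊓ L := by
      refine le_antisymm (le_inf hIJ hIL) ?_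
      rintro z ⟨hzJ, hzL⟩
      rw [hLspan] at hzL
      obtain ⟨i, hi, w, hw, heq⟩ := Submodule.mem_sup.mp hzL
      obtain ⟨c, hc⟩ := Ideal.mem_span_singleton'.mp hw
      by_cases hcm : c ∈ m
      · have : x * c ∈ I := (hmemL x).mp hxL c hcm
        rw [← heq, ← hc]
        exact I.add_mem hi (by rwa [mul_comm])
      · obtain ⟨d, hd⟩ := (hunit c hcm).exists_left_inv
        exfalso
        have hxmem : x = d * (z - i) := by
          have : c * x = z - i := by rw [← heq, ← hc]; ring
          calc x = (d * c) * x := by rw [hd, one_mul]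
          _ = d * (c * x) := by ring
          _ = d * (z - i) := by rw [this]
        exact hxJ (by rw [hxmem]; exact Ideal.mul_mem_left _ d (Submodule.sub_mem _ hzJ (hIJ hi)))
    rcases hgor.2 _ _ hJL with h | h
    · exact hne h
    · exact hxI (h ▸ hxL)
  -- main claim : x * x ∈ I * L
  have hx2 : x * x ∈ I * L := by
    by_cases hgood : ∃ a b z w : R, z * b ∈ I ∧ z * a ∉ I ∧ w * a ∈ I ∧ w * b ∉ I
    · -- good case
      obtain ⟨a, b, z, w, hzb, hza, hwa, hwb⟩ := hgood
      -- x ∈ I ⊔ span{a} * (I : b)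
      have hdecomp : ∀ a b z : R, z * b ∈ I → z * a ∉ I →
          ∃ i r, i ∈ I ∧ r * b ∈ I ∧ x = i + a * r := by
        intro a b z hzb hza
        set P := I ⊔ Ideal.span {a} * I.colon (Ideal.span {b}) with hP
        have hIP : I ≤ P := le_sup_left
        have hPne : I ≠ P := by
          intro h
          have hz' : z ∈ I.colon (Ideal.span {b}) := Ideal.mem_colon_span_singleton.mpr hzb
          have : a * z ∈ Ideal.span {a} * I.colon (Ideal.span {b}) :=
            Ideal.mul_mem_mul (Ideal.mem_span_singleton_self a) hz'
          have : a * z ∈ I := by rw [h]; exact Submodule.mem_sup_right this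
          exact hza (by rwa [mul_comm] at this)
        have hxP := hstar P hIP hPne
        obtain ⟨i, hi, p, hp, heq⟩ := Submodule.mem_sup.mp hxP
        obtain ⟨r, hr, hra⟩ := Ideal.mem_span_singleton_mul.mp hp
        exact ⟨i, r, hi, Ideal.mem_colon_span_singleton.mp hr, by rw [← heq, ← hra]⟩
      obtain ⟨i₁, r, hi₁, hrb, hx1⟩ := hdecomp a b z hzb hza
      obtain ⟨i₂, s, hi₂, hsa, hx2'⟩ := hdecomp b a w hwa hwb
      -- x * x = (r*b)*(s*a) + i₁*x + x*i₂ - i₁*i₂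
      have key : x * x = (r * b) * (s * a) + i₁ * x + x * i₂ - i₁ * i₂ := by
        linear_combination (x - i₁) * hx2' + (b * s) * hx1
      rw [key]
      have t1 : (r * b) * (s * a) ∈ I * L := Ideal.mul_mem_mul hrb (hIL hsa)
      have t2 : i₁ * x ∈ I * L := Ideal.mul_mem_mul hi₁ hxL
      have t3 : x * i₂ ∈ I * L := by rw [mul_comm x i₂]; exact Ideal.mul_mem_mul hi₂ hxL
      have t4 : i₁ * i₂ ∈ I * L := Ideal.mul_mem_mul hi₁ (hIL hi₂)
      exact Submodule.sub_mem _ (Submodule.add_mem _ (Submodule.add_mem _ t1 t2) t3) t4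
    · -- bad case : colon ideals are totally ordered ⇒ m is principal, contradiction
      exfalso
      push_neg at hgood
      have hbad : ∀ a b : R, I.colon (Ideal.span {a}) ≤ I.colon (Ideal.span {b}) ∨
          I.colon (Ideal.span {b}) ≤ I.colon (Ideal.span {a}) := by
        intro a b
        by_contra hc
        push_neg at hc
        obtain ⟨h1, h2⟩ := hc
        obtain ⟨w, hwa, hwb⟩ := SetLike.not_le_iff_exists.mp h1
        obtain ⟨z, hzb, hza⟩ := SetLike.not_le_iff_exists.mp h2
        rw [Ideal.mem_colon_span_singleton] at hwa hzb
        have hza' : z * a ∉ I := fun h => hza (Ideal.mem_colon_span_singleton.mpr h)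
        have hwb' : w * b ∉ I := fun h => hwb (Ideal.mem_colon_span_singleton.mpr h)
        exact hwb' (hgood a b z w hzb hza' hwa)
      -- pick y₁ ∈ m \ I with maximal double colon
      obtain ⟨y₀, hy₀m, hy₀n⟩ := SetLike.not_le_iff_exists.mp hm2m
      have hy₀I : y₀ ∉ I := fun h => hy₀n (hm2 h)
      set T : Set (Ideal R) :=
        (fun y => I.colon (I.colon (Ideal.span {y}))) '' {y | y ∈ m ∧ y ∉ I} with hT
      have hTne : T.Nonempty := ⟨_, ⟨y₀, ⟨hy₀m, hy₀I⟩, rfl⟩⟩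
      obtain ⟨J', hJ'T, hmaxJ'⟩ :=
        (set_has_maximal_iff_noetherian.mpr (inferInstance : IsNoetherianRing R)) T hTne
      obtain ⟨y₁, ⟨hy₁m, hy₁I⟩, rfl⟩ := hJ'T
      -- I : y₁ is the smallest colon ideal
      have hQ : ∀ z, z ∈ m → z ∉ I →
          I.colon (Ideal.span {y₁}) ≤ I.colon (Ideal.span {z}) := by
        intro z hzm hzI
        rcases hbad y₁ z with h | h
        · exact h
        · -- colon z ≤ colon y₁, use maximality of double colon
          have hdc : I.colon (I.colon (Ideal.span {y₁})) ≤
              I.colon (I.colon (Ideal.span {z})) := by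
            intro q hq
            rw [Submodule.mem_colon] at hq ⊢
            intro p hp
            exact hq p (h hp)
          have hzT : I.colon (I.colon (Ideal.span {z})) ∈ T := ⟨z, ⟨hzm, hzI⟩, rfl⟩
          have heq : I.colon (I.colon (Ideal.span {y₁})) =
              I.colon (I.colon (Ideal.span {z})) := by
            by_contra hne
            exact hmaxJ' _ hzT (lt_of_le_of_ne hdc hne)
          have hzJ : z ∈ I.colon (I.colon (Ideal.span {y₁})) := by
            rw [heq, Submodule.mem_colon]
            intro p hp
            rw [smul_eq_mul, mul_comm]
            exact Ideal.mem_colon_span_singleton.mp hp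
          intro p hp
          rw [Ideal.mem_colon_span_singleton, mul_comm]
          rw [Submodule.mem_colon] at hzJ
          exact hzJ p hp
      have hQL : I.colon (Ideal.span {y₁}) ≤ L := by
        intro q hq
        refine (hmemL q).mpr ?_
        intro p hp
        by_cases hpI : p ∈ I
        · exact Ideal.mul_mem_left I q hpI
        · exact Ideal.mem_colon_span_singleton.mp (hQ p hp hpI hq)
      -- minimal N with y₁ ^ N ∈ I
      have hpowy : ∃ n, y₁ ^ n ∈ I := by
        obtain ⟨n, hn⟩ := hpow
        exact ⟨n, hn (Ideal.pow_mem_pow hy₁m n)⟩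
      set N := Nat.find hpowy with hNdef
      have hN : y₁ ^ N ∈ I := Nat.find_spec hpowy
      have hNmin : ∀ k, k < N → y₁ ^ k ∉ I := fun k hk => Nat.find_min hpowy hk
      have hN2 : 2 ≤ N := by
        rcases Nat.lt_or_ge N 2 with h | h
        · interval_cases N
          · rw [pow_zero] at hN
            exact absurd (Ideal.eq_top_iff_one I |>.mpr hN) hItop
          · rw [pow_one] at hN
            exact absurd hN hy₁I
        · exact h
      -- y₁ ^ (N-1) ∈ L \ I
      have hy₁N1 : y₁ ^ (N - 1) ∈ I.colon (Ideal.span {y₁}) := by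
        rw [Ideal.mem_colon_span_singleton, ← pow_succ]
        have : N - 1 + 1 = N := by omega
        rwa [this]
      have hy₁N1L : y₁ ^ (N - 1) ∈ L := hQL hy₁N1
      have hy₁N1I : y₁ ^ (N - 1) ∉ I := hNmin (N - 1) (by omega)
      -- L ≤ I ⊔ span {y₁^(N-1)}
      have hLle : L ≤ I ⊔ Ideal.span {y₁ ^ (N - 1)} := by
        have hne : I ≠ I ⊔ Ideal.span {y₁ ^ (N - 1)} := by
          intro h
          exact hy₁N1I (by
            have : y₁ ^ (N - 1) ∈ I ⊔ Ideal.span {y₁ ^ (N - 1)} :=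
              Submodule.mem_sup_right (Ideal.mem_span_singleton_self _)
            rwa [← h] at this)
        have hxJ := hstar _ le_sup_left hne
        rw [hLspan]
        exact sup_le le_sup_left ((Ideal.span_singleton_le_iff_mem _).mpr hxJ)
      -- induction : colon of powers of y₁ lie in I ⊔ (y₁)
      have h3 : ∀ k, k + 1 ≤ N → ∀ z : R, z * y₁ ^ k ∈ I → z ∈ I ⊔ Ideal.span {y₁} := by
        intro k
        induction k with
        | zero =>
          intro _ z hz
          rw [pow_zero, mul_one] at hz
          exact Submodule.mem_sup_left hz
        | succ k ih =>
          intro hk2 z hz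
          have hz' : (z * y₁ ^ k) * y₁ ∈ I := by
            rw [mul_assoc, ← pow_succ]
            exact hz
          have : z * y₁ ^ k ∈ L := hQL (Ideal.mem_colon_span_singleton.mpr hz')
          have := hLle this
          obtain ⟨i, hi, w, hw, heq⟩ := Submodule.mem_sup.mp this
          obtain ⟨c, hc⟩ := Ideal.mem_span_singleton'.mp hw
          set j := N - 1 - k with hj
          have hj1 : 1 ≤ j := by omega
          have hpowe : y₁ ^ j * y₁ ^ k = y₁ ^ (N - 1) := by
            rw [← pow_add]
            congr 1
            omega
          have hsub : (z - c * y₁ ^ j) * y₁ ^ k ∈ I := by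
            have e : (z - c * y₁ ^ j) * y₁ ^ k = i := by
              have : i + c * y₁ ^ (N - 1) = z * y₁ ^ k := by rw [← hc] at heq; exact heq
              calc (z - c * y₁ ^ j) * y₁ ^ k
                  = z * y₁ ^ k - c * (y₁ ^ j * y₁ ^ k) := by ring
                _ = z * y₁ ^ k - c * y₁ ^ (N - 1) := by rw [hpowe]
                _ = i := by rw [← this]; ring
            rw [e]
            exact hi
          have hzi : z - c * y₁ ^ j ∈ I ⊔ Ideal.span {y₁} := ih (by omega) _ hsub
          have hcy : c * y₁ ^ j ∈ Ideal.span {y₁} := by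
            rw [Ideal.mem_span_singleton]
            exact Dvd.dvd.mul_left (dvd_pow_self y₁ (by omega)) c
          have : z = (z - c * y₁ ^ j) + c * y₁ ^ j := by ring
          rw [this]
          exact Submodule.add_mem _ hzi (Submodule.mem_sup_right hcy)
      -- m ≤ I ⊔ (y₁)
      have h4 : m ≤ I ⊔ Ideal.span {y₁} := by
        intro z hz
        refine h3 (N - 1) (by omega) z ?_
        have := (hmemL _).mp hy₁N1L z hz
        rwa [mul_comm]
      -- Nakayama ⇒ m = (y₁), contradiction
      have h5 : m ≤ Ideal.span {y₁} ⊔ m • m := by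
        intro z hz
        rcases Submodule.mem_sup.mp (h4 hz) with ⟨i, hi, w, hw, heq⟩
        refine Submodule.mem_sup.mpr ⟨w, hw, i, ?_, by rw [← heq]; ring⟩
        show i ∈ m * m
        exact hm2 hi
      have h6 : m ≤ Ideal.span {y₁} := nak _ h5
      have h7 : Ideal.span {y₁} = m :=
        le_antisymm ((Ideal.span_singleton_le_iff_mem m).mpr hy₁m) h6
      exact hembdim y₁ h7
  -- conclude L² = I L
  rw [pow_two]
  refine le_antisymm ?_ ?_
  · refine Submodule.mul_le.mpr ?_
    intro p hp q hq
    rw [hLspan] at hp hq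
    obtain ⟨i, hi, w, hw, heqp⟩ := Submodule.mem_sup.mp hp
    obtain ⟨i', hi', w', hw', heqq⟩ := Submodule.mem_sup.mp hq
    obtain ⟨c, hc⟩ := Ideal.mem_span_singleton'.mp hw
    obtain ⟨c', hc'⟩ := Ideal.mem_span_singleton'.mp hw'
    have heq : p * q = i * i' + i * (c' * x) + (c * x) * i' + (c * c') * (x * x) := by
      rw [← heqp, ← heqq, ← hc, ← hc']
      ring
    rw [heq]
    have t1 : i * i' ∈ I * L := Ideal.mul_mem_mul hi (hIL hi')
    have t2 : i * (c' * x) ∈ I * L := Ideal.mul_mem_mul hi (L.mul_mem_left c' hxL)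
    have t3 : (c * x) * i' ∈ I * L := by
      rw [mul_comm (c * x) i']
      exact Ideal.mul_mem_mul hi' (L.mul_mem_left c hxL)
    have t4 : (c * c') * (x * x) ∈ I * L := Submodule.smul_mem _ _ hx2
    exact Submodule.add_mem _ (Submodule.add_mem _ (Submodule.add_mem _ t1 t2) t3) t4
  · refine Submodule.mul_le.mpr ?_
    intro r hr s hs
    exact Ideal.mul_mem_mul (hIL hr) hs
end

section
/- Let (R, m) be a Noetherian local ring with embedding dimension n ≥ 2, and let I be an m-primary ideal contained in m² such that R/I is Gorenstein. Set L = I : m. Then I·m = L·m. -/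
universe u

/-!
Suppose `x ∈ I : m` and `y ∈ m` with `x * y ∉ I * m`. An ideal `J ⊇ I * m` maximal with
`x * y ∉ J` has socle `J : m ⊆ J + (x * y)`, and irreducibility of `I` forces `J : y = I`;
hence `I : y ⊆ I + (x)`. As `x` is a socle element of `R / I`, taking `n` with
`y ^ (n + 1) ∉ I ∋ y ^ (n + 2)` gives `I + (x) = I + (y ^ (n + 1))`, and peeling off one power
of `y` at a time yields `m ⊆ I : y ^ (n + 1) ⊆ I + (y) ⊆ (y) + m ^ 2`. Nakayama then makes `m`
principal.
-/

open Ideal IsLocalRing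

section

variable {R : Type*} [CommRing R]

theorem Ideal.colon_singleton_pow_succ_le {I : Ideal R} {y : R} (k d : ℕ)
    (h : I.colon {y} ≤ I ⊔ span {y ^ (k + d)}) :
    I.colon {y ^ (k + 1)} ≤ I ⊔ span {y ^ d} := by
  induction k generalizing d with
  | zero => simpa using h
  | succ k ih =>
    intro w hw
    have hwy : w * y ∈ I ⊔ span {y ^ (d + 1)} :=
      ih (d + 1) (by rwa [← add_assoc, add_right_comm]) <| Submodule.mem_colon_singleton.mpr <| by
        rw [smul_eq_mul, show w * y * y ^ (k + 1) = w * y ^ (k + 1 + 1) by ring]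
        exact Submodule.mem_colon_singleton.mp hw
    obtain ⟨i, hi, _, hz, hsum⟩ := Submodule.mem_sup.mp hwy
    obtain ⟨a, rfl⟩ := mem_span_singleton'.mp hz
    have hdiff : w - a * y ^ d ∈ I ⊔ span {y ^ (k + 1 + d)} :=
      h <| Submodule.mem_colon_singleton.mpr <| by
        rw [smul_eq_mul, show (w - a * y ^ d) * y = i by linear_combination -hsum]
        exact hi
    have hle : I ⊔ span {y ^ (k + 1 + d)} ≤ I ⊔ span {y ^ d} :=
      sup_le_sup_left (span_singleton_le_span_singleton.mpr (pow_dvd_pow y (by omega))) I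
    rw [← sub_add_cancel w (a * y ^ d)]
    exact add_mem (hle hdiff)
      (Submodule.mem_sup_right (mul_mem_left _ a (mem_span_singleton_self _)))

theorem IsLocalRing.mem_or_mem_sup_span_singleton_of_mem_sup [IsLocalRing R] {J : Ideal R}
    {g z : R} (hg : g ∈ J.colon (maximalIdeal R : Set R)) (hz : z ∈ J ⊔ span {g}) :
    z ∈ J ∨ g ∈ J ⊔ span {z} := by
  obtain ⟨j, hj, _, hrg, rfl⟩ := Submodule.mem_sup.mp hz
  obtain ⟨r, rfl⟩ := mem_span_singleton'.mp hrg
  by_cases hr : r ∈ maximalIdeal R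
  · exact .inl (add_mem hj (mul_comm g r ▸ Submodule.mem_colon.mp hg r hr))
  · refine .inr ((unit_mul_mem_iff_mem _ (notMem_maximalIdeal.mp hr)).mp ?_)
    have hsub := sub_mem (Submodule.mem_sup_right (mem_span_singleton_self (j + r * g)))
      (Submodule.mem_sup_left hj : j ∈ J ⊔ span {j + r * g})
    rwa [add_sub_cancel_left] at hsub

theorem IsLocalRing.colon_maximalIdeal_le_sup_span_singleton [IsLocalRing R] {J : Ideal R}
    {z : R} (hzJ : z ∉ J) (hJ : ∀ K, J < K → z ∈ K) :
    J.colon (maximalIdeal R : Set R) ≤ J ⊔ span {z} := by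
  intro g hg
  by_cases hgJ : g ∈ J
  · exact Submodule.mem_sup_left hgJ
  have hz : z ∈ J ⊔ span {g} := hJ _ (left_lt_sup.mpr (by rwa [span_singleton_le_iff_mem]))
  exact (mem_or_mem_sup_span_singleton_of_mem_sup hg hz).resolve_left hzJ

theorem Ideal.IsIrreducibleIdeal.mem_of_lt [IsLocalRing R] {I K : Ideal R} {x : R}
    (hI : I.IsIrreducibleIdeal) (hx : x ∈ I.colon (maximalIdeal R : Set R)) (hxI : x ∉ I)
    (hK : I < K) : x ∈ K := by
  by_contra hxK
  have hinf : I = K ⊓ (I ⊔ span {x}) := by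
    refine le_antisymm (le_inf hK.le le_sup_left) fun z ⟨hzK, hzI⟩ => ?_
    refine (mem_or_mem_sup_span_singleton_of_mem_sup hx hzI).resolve_right fun h => hxK ?_
    exact sup_le hK.le ((span_singleton_le_iff_mem _).mpr hzK) h
  rcases hI.2 _ _ hinf with h | h
  · exact hK.ne h
  · exact hxI (h ▸ Submodule.mem_sup_right (mem_span_singleton_self x))

theorem Ideal.exists_le_forall_lt_mem [IsNoetherianRing R] {N : Ideal R} {z : R} (hz : z ∉ N) :
    ∃ J, N ≤ J ∧ z ∉ J ∧ ∀ K, J < K → z ∈ K := by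
  obtain ⟨J, ⟨hNJ, hzJ⟩, hmax⟩ := set_has_maximal_iff_noetherian.mpr inferInstance
    {J : Ideal R | N ≤ J ∧ z ∉ J} ⟨N, le_rfl, hz⟩
  exact ⟨J, hNJ, hzJ, fun K hK => by_contra fun hzK => hmax K ⟨hNJ.trans hK.le, hzK⟩ hK⟩

theorem IsLocalRing.eq_maximalIdeal_of_le_sup_sq [IsLocalRing R] [IsNoetherianRing R]
    {N : Ideal R} (hN : N ≤ maximalIdeal R) (h : maximalIdeal R ≤ N ⊔ maximalIdeal R ^ 2) :
    N = maximalIdeal R :=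
  hN.antisymm <| Submodule.le_of_le_smul_of_le_jacobson_bot (IsNoetherian.noetherian _)
    (maximalIdeal_le_jacobson ⊥) (by rwa [smul_eq_mul, ← pow_two])

theorem IsLocalRing.colon_maximalIdeal_le_maximalIdeal [IsLocalRing R] [IsNoetherianRing R]
    {I : Ideal R} (hI : I ≤ maximalIdeal R ^ 2) (hm : maximalIdeal R ≠ ⊥) :
    I.colon (maximalIdeal R : Set R) ≤ maximalIdeal R := by
  intro g hg
  by_contra hgm
  have hmI : maximalIdeal R ≤ I := fun t ht =>
    (unit_mul_mem_iff_mem _ (notMem_maximalIdeal.mp hgm)).mp (Submodule.mem_colon.mp hg t ht)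
  exact hm (eq_maximalIdeal_of_le_sup_sq bot_le ((hmI.trans hI).trans le_sup_right)).symm

theorem Ideal.IsIrreducibleIdeal.colon_singleton_le_sup_span_singleton [IsLocalRing R]
    [IsNoetherianRing R] {I : Ideal R} {x y : R} (hI : I.IsIrreducibleIdeal)
    (hx : x ∈ I.colon (maximalIdeal R : Set R)) (hy : y ∈ maximalIdeal R)
    (hxy : x * y ∉ I * maximalIdeal R) : I.colon {y} ≤ I ⊔ span {x} := by
  obtain ⟨J, hImJ, hxyJ, hJ⟩ := exists_le_forall_lt_mem hxy
  have hIJ : I ≤ J ⊔ span {x * y} := fun g hg =>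
    colon_maximalIdeal_le_sup_span_singleton hxyJ hJ
      (Submodule.mem_colon.mpr fun t ht => hImJ (mul_mem_mul hg ht))
  have hJy : J.colon {y} = I := by
    have hIJy : I ≤ J.colon {y} := fun g hg =>
      Submodule.mem_colon_singleton.mpr (hImJ (mul_mem_mul hg hy))
    have hxI : x ∉ I := fun h => hxy (mul_mem_mul h hy)
    refine (eq_of_le_of_not_lt hIJy fun hlt => hxyJ ?_).symm
    exact Submodule.mem_colon_singleton.mp (hI.mem_of_lt hx hxI hlt)
  intro w hw
  obtain ⟨j, hj, _, hz, hsum⟩ :=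
    Submodule.mem_sup.mp (hIJ (Submodule.mem_colon_singleton.mp hw))
  obtain ⟨r, rfl⟩ := mem_span_singleton'.mp hz
  have hdiff : w - r * x ∈ J.colon {y} := Submodule.mem_colon_singleton.mpr <| by
    rw [smul_eq_mul, show (w - r * x) * y = j by linear_combination -hsum]
    exact hj
  rw [hJy] at hdiff
  rw [← sub_add_cancel w (r * x)]
  exact add_mem (Submodule.mem_sup_left hdiff)
    (Submodule.mem_sup_right (mul_mem_left _ r (mem_span_singleton_self x)))

theorem IsLocalRing.maximalIdeal_le_sup_span_singleton_of_colon_le [IsLocalRing R]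
    {I : Ideal R} {x y : R} {n : ℕ} (hx : x ∈ I.colon (maximalIdeal R : Set R))
    (hIy : I.colon {y} ≤ I ⊔ span {x})
    (hn : y ^ (n + 1) ∉ I) (hn' : y ^ (n + 2) ∈ I) :
    maximalIdeal R ≤ I ⊔ span {y} := by
  have hsocle : I ⊔ span {x} ≤ I.colon (maximalIdeal R : Set R) :=
    sup_le le_colon ((span_singleton_le_iff_mem _).mpr hx)
  have hyn : y ^ (n + 1) ∈ I ⊔ span {x} :=
    hIy (Submodule.mem_colon_singleton.mpr (by rw [smul_eq_mul, ← pow_succ]; exact hn'))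
  have hxyn : x ∈ I ⊔ span {y ^ (n + 1)} :=
    (mem_or_mem_sup_span_singleton_of_mem_sup hx hyn).resolve_left hn
  have hcolon : I.colon {y} ≤ I ⊔ span {y ^ (n + 1)} :=
    hIy.trans (sup_le le_sup_left ((span_singleton_le_iff_mem _).mpr hxyn))
  have hpow := colon_singleton_pow_succ_le n 1 hcolon
  rw [pow_one] at hpow
  refine le_trans (fun t ht => ?_) hpow
  rw [Submodule.mem_colon_singleton, smul_eq_mul, mul_comm]
  exact Submodule.mem_colon.mp (hsocle hyn) t ht

end

/-- **Lemma.** Let `(R, m)` be a Noetherian local ring of embedding dimension at least two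
(i.e. `m` is not principal) and let `I ⊆ m²` be an `m`-primary ideal with `R ⧸ I`
Gorenstein (equivalently, `I` irreducible). Then `I m = L m` where `L = I : m`. -/
theorem socle_ideal_times_maximalIdeal
    {R : Type*} [CommRing R] [IsLocalRing R] [IsNoetherianRing R]
    (hembdim : ∀ a : R, Ideal.span {a} ≠ IsLocalRing.maximalIdeal R)
    (I : Ideal R) (hI2 : I ≤ IsLocalRing.maximalIdeal R ^ 2)
    (hprim : I.radical = IsLocalRing.maximalIdeal R)
    (hgor : I.IsIrreducibleIdeal)
    (L : Ideal R) (hL : L = Submodule.colon I (IsLocalRing.maximalIdeal R)) :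
    I * IsLocalRing.maximalIdeal R = L * IsLocalRing.maximalIdeal R := by
  subst hL
  refine le_antisymm (mul_mono_left le_colon) (mul_le.mpr fun x hx y hy => ?_)
  by_contra hxy
  have hm : maximalIdeal R ≠ ⊥ := by simpa using (hembdim 0).symm
  have hxm : x ∈ maximalIdeal R := colon_maximalIdeal_le_maximalIdeal hI2 hm hx
  have hyI : y ∉ I := fun h => hxy (mul_comm y x ▸ mul_mem_mul h hxm)
  obtain ⟨k, hk⟩ : y ∈ I.radical := hprim ▸ hy
  obtain ⟨n, hn, hn'⟩ := Nat.exists_not_and_succ_of_not_zero_of_exists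
    (p := fun j => y ^ (j + 1) ∈ I) (by simpa using hyI)
    ⟨k, by rw [pow_succ]; exact I.mul_mem_right y hk⟩
  have hmy : maximalIdeal R ≤ I ⊔ span {y} :=
    maximalIdeal_le_sup_span_singleton_of_colon_le hx
      (hgor.colon_singleton_le_sup_span_singleton hx hy hxy) hn hn'
  exact hembdim y (eq_maximalIdeal_of_le_sup_sq ((span_singleton_le_iff_mem _).mpr hy)
    (hmy.trans (sup_le (hI2.trans le_sup_right) le_sup_left)))
end

section
/- Let (R, m) be a Noetherian local ring and let I be an m-primary ideal such that R/I is Gorenstein. Then either (a) there exists a minimal generating set x_1, …, x_n of m and an integer s ≥ 1 such that I = (x_1, …, x_{n-1}, x_n^s), or (b) L² = I·L, where L = I : m. -/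
universe u

/-!
Write `m` for the maximal ideal and `L = I : m`. Irreducibility of `I` makes `L / I` the unique
minimal nonzero ideal of `R / I`: every ideal strictly containing `I` contains `L`, and
`L = (z) + I` for any `z ∈ L \ I`. Comparing lengths one composition factor at a time shows that
`ℓ(R / (I : J)) + ℓ(R / J)` is antitone in `J ⊇ I`; since it equals `ℓ(R / I)` at `J = I` and at
`J = R`, it is constant, which yields the duality `I : (I : J) = J`.

If `m = (ξ) + I` for some `ξ`, then `m = (ξ) + K` for an irredundant part `K` of a generating set
of `I`, and `I = (ξ ^ s) + K` for the least `s` with `ξ ^ s ∈ I`: this is the first alternative.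
Otherwise pick `a` with `a m ⊆ L`, `a ∉ L`, an `x ∈ m` with `z = a x ∉ I`, and `y ∈ m \ ((x) + I)`.
By duality `y (I : x) ⊄ I`, so `y (I : x) + I` contains `L`; writing `z = y c + i` with `c x ∈ I`
and `i ∈ I` gives `z² = (c x)(a y) + i z ∈ I L`, and `L² = I L` follows from `L = (z) + I`.
-/

open IsLocalRing Set

theorem Fin.ite_pow_last_snoc {M : Type*} [Monoid M] {n : ℕ} (y : Fin n → M) (ξ : M) (s : ℕ) :
    (fun i : Fin (n + 1) => if (i : ℕ) + 1 = n + 1 then (Fin.snoc y ξ : Fin (n + 1) → M) i ^ s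
      else (Fin.snoc y ξ : Fin (n + 1) → M) i) = Fin.snoc y (ξ ^ s) := by
  funext i
  induction i using Fin.lastCases with
  | last => simp
  | cast i => simp [i.isLt.ne]

namespace Ideal

variable {R : Type*} [CommRing R]

theorem mem_colon_iff_mul {I J : Ideal R} {r : R} : r ∈ I.colon J ↔ ∀ s ∈ J, r * s ∈ I :=
  Submodule.mem_colon

theorem le_colon_colon (I J : Ideal R) : J ≤ I.colon (I.colon J) := fun w hw =>
  mem_colon_iff_mul.mpr fun c hc => mul_comm c w ▸ mem_colon_iff_mul.mp hc w hw

theorem colon_span_singleton_sup (I C : Ideal R) (u : R) :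
    I.colon ↑(span {u} ⊔ C) = I.colon (span {u}) ⊓ I.colon C := by
  rw [← C.span_eq, ← span_insert, Submodule.colon_span, insert_eq, Submodule.colon_union,
    span_eq, colon_span]

theorem torsionOf_mk_eq_colon (J : Ideal R) (u : R) :
    torsionOf R (R ⧸ J) (Submodule.Quotient.mk u) = J.colon (span {u}) := by
  ext r
  rw [mem_torsionOf_iff, mem_colon_span_singleton, ← smul_eq_mul, ← Submodule.Quotient.mk_smul,
    Submodule.Quotient.mk_eq_zero]

/-- `Order.coheight J`, taken in the lattice of ideals, is the length of `R ⧸ J`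
(`Module.length_quotient`); this is the exact sequence `0 → R/(J : u) → R/J → R/((u) + J) → 0`. -/
theorem coheight_eq_coheight_colon_add_coheight_sup (J : Ideal R) (u : R) :
    Order.coheight J = Order.coheight (J.colon (span {u})) + Order.coheight (span {u} ⊔ J) := by
  set N : Submodule R (R ⧸ J) := Submodule.span R {Submodule.Quotient.mk u}
  have hN : Submodule.map (Submodule.mkQ J) (span {u} ⊔ J) = N := by
    rw [Submodule.map_sup, Submodule.mkQ_map_self, sup_bot_eq, span, Submodule.map_span,
      image_singleton]
    rfl
  rw [← Module.length_quotient, ← Module.length_quotient, ← Module.length_quotient,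
    Module.length_eq_add_of_exact N.subtype N.mkQ N.injective_subtype N.mkQ_surjective
      (LinearMap.exact_subtype_mkQ N),
    (quotTorsionOfEquivSpanSingleton R _ _).symm.length_eq, torsionOf_mk_eq_colon, ← hN,
    (Submodule.quotientQuotientEquivQuotient J _ le_sup_right).length_eq]

theorem exists_mem_colon_notMem_of_pow_mul_le {P C D : Ideal R} {T : ℕ} (hT : P ^ T * D ≤ C)
    (hDC : ¬ D ≤ C) : ∃ u ∈ D, u ∉ C ∧ u ∈ C.colon P := by
  induction T generalizing D with
  | zero => exact absurd (by simpa using hT) hDC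
  | succ T ih =>
    by_cases hPD : P * D ≤ C
    · obtain ⟨u, hu, huC⟩ := SetLike.not_le_iff_exists.mp hDC
      exact ⟨u, hu, huC, mem_colon_iff_mul.mpr fun r hr =>
        hPD (mul_comm r u ▸ mul_mem_mul hr hu)⟩
    · have hT' : P ^ T * (P * D) ≤ C := by rw [← mul_assoc, ← pow_succ]; exact hT
      obtain ⟨u, hu, huC, hPu⟩ := ih hT' hPD
      exact ⟨u, mul_le_right hu, huC, hPu⟩

theorem exists_irredundant_subfamily (F : Ideal R) : ∀ {n : ℕ} (g : Fin n → R),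
    ∃ (m : ℕ) (y : Fin m → R), range y ⊆ range g ∧
      F ⊔ span (range y) = F ⊔ span (range g) ∧ ∀ i, y i ∉ F ⊔ span (y '' {j | j ≠ i})
  | 0, g => ⟨0, g, subset_rfl, rfl, fun i => i.elim0⟩
  | n + 1, g => by
    by_cases h : ∃ i, g i ∈ F ⊔ span (g '' {j | j ≠ i})
    · obtain ⟨i, hi⟩ := h
      have hrange : range (g ∘ i.succAbove) = g '' {j | j ≠ i} := by
        rw [range_comp, Fin.range_succAbove]
        rfl
      obtain ⟨m, y, hy, hspan, hirr⟩ := exists_irredundant_subfamily F (g ∘ i.succAbove)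
      refine ⟨m, y, hy.trans (hrange ▸ image_subset_range _ _), ?_, hirr⟩
      rw [hspan, hrange]
      refine le_antisymm (sup_le_sup_left (span_mono (image_subset_range _ _)) _)
        (sup_le le_sup_left (span_le.mpr ?_))
      rintro _ ⟨j, rfl⟩
      by_cases hj : j = i
      · exact hj ▸ hi
      · exact mem_sup_right (subset_span ⟨j, hj, rfl⟩)
    · push Not at h
      exact ⟨_, g, subset_rfl, rfl, h⟩

theorem exists_irredundant_generators (F : Ideal R) {N : Ideal R} (hN : N.FG) :
    ∃ (n : ℕ) (y : Fin n → R), span (range y) ≤ N ∧ F ⊔ span (range y) = F ⊔ N ∧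
      ∀ i, y i ∉ F ⊔ span (y '' {j | j ≠ i}) := by
  obtain ⟨n, g, hg⟩ : ∃ (n : ℕ) (g : Fin n → R), span (range g) = N :=
    Submodule.fg_iff_exists_fin_generating_family.mp hN
  obtain ⟨m, y, hy, hspan, hirr⟩ := exists_irredundant_subfamily F g
  exact ⟨m, y, (span_mono hy).trans hg.le, hg ▸ hspan, hirr⟩

theorem snoc_notMem_span_image {n : ℕ} {y : Fin n → R} {ξ : R}
    (hy : ∀ i, y i ∉ span {ξ} ⊔ span (y '' {j | j ≠ i})) (hξ : ξ ∉ span (range y))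
    (i : Fin (n + 1)) :
    (Fin.snoc y ξ : Fin (n + 1) → R) i ∉ span (Fin.snoc y ξ '' {j | j ≠ i}) := by
  induction i using Fin.lastCases with
  | last =>
    have himage : (Fin.snoc y ξ : Fin (n + 1) → R) '' {j | j ≠ Fin.last n} ⊆ range y := by
      rintro _ ⟨j, hj, rfl⟩
      obtain ⟨j, rfl⟩ := Fin.exists_castSucc_eq.mpr hj
      simp
    simpa using fun h => hξ (span_mono himage h)
  | cast i =>
    have himage : (Fin.snoc y ξ : Fin (n + 1) → R) '' {j | j ≠ i.castSucc} ⊆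
        insert ξ (y '' {j | j ≠ i}) := by
      rintro _ ⟨j, hj, rfl⟩
      induction j using Fin.lastCases with
      | last => simp
      | cast j => exact mem_insert_of_mem _ ⟨j, fun h => hj (h ▸ rfl), by simp⟩
    intro h
    apply hy i
    rw [← span_insert]
    simpa using span_mono himage h

theorem sq_eq_mul_of_eq_span_sup {I L : Ideal R} {z : R} (hL : L = span {z} ⊔ I)
    (hz : z * z ∈ I * L) : L ^ 2 = I * L := by
  have hzL : z ∈ L := hL ▸ mem_sup_left (mem_span_singleton_self z)
  have hmul : span {z} * L ≤ I * L := by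
    intro _ h
    obtain ⟨l, hl, rfl⟩ := mem_span_singleton_mul.mp h
    obtain ⟨r, i, hi, rfl⟩ := mem_span_singleton_sup.mp (hL ▸ hl)
    rw [mul_add, mul_left_comm, mul_comm z i]
    exact add_mem (mul_mem_left _ r hz) (mul_mem_mul hi hzL)
  refine le_antisymm ?_ (pow_two L ▸ mul_mono_left (hL ▸ le_sup_right))
  calc L ^ 2 = (span {z} ⊔ I) * L := by rw [pow_two, ← hL]
    _ ≤ I * L := by rw [sup_mul]; exact sup_le hmul le_rfl

section IsLocalRing

variable [IsLocalRing R]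

theorem coheight_maximalIdeal : Order.coheight (maximalIdeal R) = 1 := by
  have : IsSimpleModule R (R ⧸ maximalIdeal R) :=
    isSimpleModule_iff_isCoatom.mpr (isMaximal_def.mp (maximalIdeal.isMaximal R))
  rw [← Module.length_quotient, Module.length_eq_one]

theorem coheight_le_coheight_span_sup_add_one {J : Ideal R} {u : R}
    (hu : u ∈ J.colon (maximalIdeal R)) :
    Order.coheight J ≤ Order.coheight (span {u} ⊔ J) + 1 := by
  have hmu : maximalIdeal R ≤ J.colon (span {u}) := fun r hr =>
    mem_colon_span_singleton.mpr (mul_comm u r ▸ mem_colon_iff_mul.mp hu r hr)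
  rw [coheight_eq_coheight_colon_add_coheight_sup J u, add_comm]
  gcongr
  exact coheight_maximalIdeal (R := R) ▸ Order.coheight_anti hmu

theorem eq_span_pow_sup_of_maximalIdeal_eq {I K : Ideal R} {ξ : R} {s : ℕ}
    (hm : maximalIdeal R = span {ξ} ⊔ K) (hKI : K ≤ I) (hs : ξ ^ s ∈ I)
    (hmin : ∀ t < s, ξ ^ t ∉ I) : I = span {ξ ^ s} ⊔ K := by
  refine le_antisymm ?_ (sup_le (span_le.mpr (singleton_subset_iff.mpr hs)) hKI)
  suffices ∀ t ≤ s, I ≤ span {ξ ^ t} ⊔ K from this s le_rfl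
  intro t
  induction t with
  | zero => simp
  | succ t ih =>
    intro hts a ha
    obtain ⟨r, k, hk, rfl⟩ := mem_span_singleton_sup.mp (ih (by omega) ha)
    have hr : r ∈ maximalIdeal R := by
      by_contra hr
      refine hmin t (by omega) ((unit_mul_mem_iff_mem I (notMem_maximalIdeal.mp hr)).mp ?_)
      simpa using sub_mem ha (hKI hk)
    obtain ⟨r', k', hk', rfl⟩ := mem_span_singleton_sup.mp (hm ▸ hr)
    refine mem_span_singleton_sup.mpr
      ⟨r', k' * ξ ^ t + k, add_mem (mul_mem_right _ _ hk') hk, ?_⟩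
    ring

theorem exists_generators_of_maximalIdeal_le_span_sup [IsNoetherianRing R] {I : Ideal R}
    [IsArtinianRing (R ⧸ I)] (hI : I ≠ ⊤) {ξ : R} (hξ : ξ ∈ maximalIdeal R)
    (hm : maximalIdeal R ≤ span {ξ} ⊔ I) :
    ∃ (n : ℕ) (x : Fin n → R) (s : ℕ), 1 ≤ s ∧ span (range x) = maximalIdeal R ∧
      (∀ i, x i ∉ span (x '' {j | j ≠ i})) ∧
      I = span (range fun i : Fin n => if (i : ℕ) + 1 = n then x i ^ s else x i) := by
  by_cases hmI : maximalIdeal R ≤ I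
  · obtain ⟨k, y, -, hspan, hirr⟩ :=
      exists_irredundant_generators ⊥ (IsNoetherian.noetherian (maximalIdeal R))
    simp only [bot_sup_eq] at hspan hirr
    refine ⟨k, y, 1, le_rfl, hspan, hirr, ?_⟩
    simpa [hspan] using le_antisymm (le_maximalIdeal hI) hmI
  classical
  obtain ⟨T, hT⟩ := exists_maximalIdeal_pow_le_of_isArtinianRing_quotient I
  have hex : ∃ s, ξ ^ s ∈ I := ⟨T, hT (pow_mem_pow hξ T)⟩
  obtain ⟨k, y, hKI, hspan, hirr⟩ :=
    exists_irredundant_generators (span {ξ}) (IsNoetherian.noetherian I)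
  have hmK : maximalIdeal R = span {ξ} ⊔ span (range y) := by
    rw [hspan]
    exact le_antisymm hm (sup_le (span_le.mpr (singleton_subset_iff.mpr hξ)) (le_maximalIdeal hI))
  have hξK : ξ ∉ span (range y) := fun h =>
    hmI (hmK.trans_le (sup_le (span_le.mpr (singleton_subset_iff.mpr h)) le_rfl) |>.trans hKI)
  have hs : Nat.find hex ≠ 0 := fun h =>
    hI ((eq_top_iff_one I).mpr (by simpa [h] using Nat.find_spec hex))
  refine ⟨k + 1, Fin.snoc y ξ, Nat.find hex, Nat.one_le_iff_ne_zero.mpr hs, ?_,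
    snoc_notMem_span_image hirr hξK, ?_⟩
  · rw [Fin.range_snoc, span_insert, hmK]
  · rw [Fin.ite_pow_last_snoc, Fin.range_snoc, span_insert]
    exact eq_span_pow_sup_of_maximalIdeal_eq hmK hKI (Nat.find_spec hex)
      fun t ht => Nat.find_min hex ht

namespace IsIrreducibleIdeal

variable {I : Ideal R}

theorem colon_maximalIdeal_le (hI : I.IsIrreducibleIdeal) {J : Ideal R} (hIJ : I < J) :
    I.colon (maximalIdeal R) ≤ J := by
  intro w hw
  by_cases hwI : w ∈ I
  · exact hIJ.le hwI
  have hlt : I < J ⊓ (span {w} ⊔ I) := by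
    refine lt_of_le_of_ne (le_inf hIJ.le le_sup_right) fun h => ?_
    rcases hI.2 _ _ h with h | h
    · exact hIJ.ne h
    · exact hwI (h ▸ mem_sup_left (mem_span_singleton_self w))
  obtain ⟨_, ⟨hJ, hw'⟩, hw'I⟩ := SetLike.exists_of_lt hlt
  obtain ⟨r, i, hi, rfl⟩ := mem_span_singleton_sup.mp hw'
  have hr : IsUnit r := notMem_maximalIdeal.mp fun hr =>
    hw'I (add_mem (mul_comm w r ▸ mem_colon_iff_mul.mp hw r hr) hi)
  exact (unit_mul_mem_iff_mem J hr).mp (by simpa using sub_mem hJ (hIJ.le hi))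

theorem colon_maximalIdeal_eq (hI : I.IsIrreducibleIdeal) {w : R}
    (hw : w ∈ I.colon (maximalIdeal R)) (hwI : w ∉ I) :
    I.colon (maximalIdeal R) = span {w} ⊔ I :=
  le_antisymm (hI.colon_maximalIdeal_le (SetLike.lt_iff_le_and_exists.mpr
      ⟨le_sup_right, w, mem_sup_left (mem_span_singleton_self w), hwI⟩))
    (sup_le (span_le.mpr (singleton_subset_iff.mpr hw)) le_colon)

theorem colon_le_span_sup_colon (hI : I.IsIrreducibleIdeal) {C : Ideal R} {u w : R}
    (hu : u ∈ C.colon (maximalIdeal R)) (hw : w ∈ I.colon C)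
    (hwu : w ∉ I.colon ↑(span {u} ⊔ C)) :
    I.colon C ≤ span {w} ⊔ I.colon ↑(span {u} ⊔ C) := by
  have hsoc : ∀ v ∈ I.colon C, v * u ∈ I.colon (maximalIdeal R) := fun v hv =>
    mem_colon_iff_mul.mpr fun r hr =>
      mul_assoc v u r ▸ mem_colon_iff_mul.mp hv _ (mem_colon_iff_mul.mp hu r hr)
  have hwuI : w * u ∉ I := fun h => hwu <| by
    rw [colon_span_singleton_sup]
    exact ⟨mem_colon_span_singleton.mpr h, hw⟩
  intro v hv
  obtain ⟨r, i, hi, hvu⟩ := mem_span_singleton_sup.mp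
    (hI.colon_maximalIdeal_eq (hsoc w hw) hwuI ▸ hsoc v hv)
  have hdiff : v - r * w ∈ I.colon ↑(span {u} ⊔ C) := by
    rw [colon_span_singleton_sup]
    refine ⟨mem_colon_span_singleton.mpr ?_, sub_mem hv (mul_mem_left _ r hw)⟩
    rw [sub_mul, ← hvu, mul_assoc]
    simpa using hi
  simpa using add_mem (mem_sup_left (mul_mem_left _ r (mem_span_singleton_self w)))
    (mem_sup_right hdiff)

theorem coheight_colon_span_sup_le (hI : I.IsIrreducibleIdeal) {C : Ideal R} {u : R}
    (hu : u ∈ C.colon (maximalIdeal R)) :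
    Order.coheight (I.colon ↑(span {u} ⊔ C)) ≤ Order.coheight (I.colon C) + 1 := by
  by_cases h : I.colon C ≤ I.colon ↑(span {u} ⊔ C)
  · exact (Order.coheight_anti h).trans le_self_add
  obtain ⟨w, hw, hwu⟩ := SetLike.not_le_iff_exists.mp h
  have hw' : w ∈ (I.colon ↑(span {u} ⊔ C)).colon (maximalIdeal R) :=
    mem_colon_iff_mul.mpr fun r hr => by
      rw [colon_span_singleton_sup]
      refine ⟨mem_colon_span_singleton.mpr ?_, mul_mem_right r _ hw⟩
      rw [mul_assoc, mul_comm r u]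
      exact mem_colon_iff_mul.mp hw _ (mem_colon_iff_mul.mp hu r hr)
  calc _ ≤ Order.coheight (span {w} ⊔ I.colon ↑(span {u} ⊔ C)) + 1 :=
        coheight_le_coheight_span_sup_add_one hw'
    _ ≤ _ := by gcongr; exact hI.colon_le_span_sup_colon hu hw hwu

theorem coheight_colon_add_coheight_le [IsNoetherianRing R] (hI : I.IsIrreducibleIdeal)
    {T : ℕ} (hT : maximalIdeal R ^ T ≤ I) {C D : Ideal R} (hIC : I ≤ C) (hCD : C ≤ D) :
    Order.coheight (I.colon D) + Order.coheight D ≤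
      Order.coheight (I.colon C) + Order.coheight C := by
  induction C using IsNoetherian.induction with
  | hgt C ih =>
    rcases hCD.lt_or_eq with hlt | rfl
    · obtain ⟨u, huD, huC, hu⟩ :=
        exists_mem_colon_notMem_of_pow_mul_le (mul_le_left.trans (hT.trans hIC)) hlt.not_ge
      have hCE : C < span {u} ⊔ C := SetLike.lt_iff_le_and_exists.mpr
        ⟨le_sup_right, u, mem_sup_left (mem_span_singleton_self u), huC⟩
      calc _ ≤ Order.coheight (I.colon ↑(span {u} ⊔ C)) + Order.coheight (span {u} ⊔ C) :=
            ih _ hCE (hIC.trans hCE.le) (sup_le (span_le.mpr (singleton_subset_iff.mpr huD)) hCD)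
        _ ≤ Order.coheight (I.colon C) + 1 + Order.coheight (span {u} ⊔ C) := by
            gcongr
            exact hI.coheight_colon_span_sup_le hu
        _ = Order.coheight (I.colon C) + (Order.coheight (span {u} ⊔ C) + 1) := by
            rw [add_assoc, add_comm 1]
        _ ≤ _ := by
            gcongr
            exact Order.coheight_add_one_le hCE
    · exact le_rfl

theorem colon_colon_eq [IsNoetherianRing R] [IsArtinianRing (R ⧸ I)] (hI : I.IsIrreducibleIdeal)
    {J : Ideal R} (hIJ : I ≤ J) : I.colon (I.colon J) = J := by
  obtain ⟨T, hT⟩ := exists_maximalIdeal_pow_le_of_isArtinianRing_quotient I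
  have : IsArtinian R (R ⧸ I) :=
    isArtinian_of_surjective_algebraMap (Quotient.mk_surjective (I := I))
  have hfin : Order.coheight I < ⊤ :=
    (Module.length_quotient (N := I) ▸ Module.length_ne_top).lt_top
  have h₁ := hI.coheight_colon_add_coheight_le hT le_rfl hIJ
  have h₂ := hI.coheight_colon_add_coheight_le hT (le_colon (S := J)) le_top
  rw [show I.colon (I : Set R) = ⊤ by simp, Order.coheight_top, zero_add] at h₁
  rw [show I.colon ((⊤ : Ideal R) : Set R) = I by simp, Order.coheight_top, add_zero] at h₂
  have hle : Order.coheight J ≤ Order.coheight (I.colon (I.colon J)) := by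
    refine (ENat.add_le_add_iff_left
      (hfin.trans_le' (Order.coheight_anti (le_colon (S := J)))).ne).mp ?_
    exact h₁.trans (h₂.trans_eq (add_comm _ _))
  refine (((le_colon_colon I J).lt_or_eq).resolve_left fun hlt => ?_).symm
  exact (Order.coheight_strictAnti hlt (hfin.trans_le' (Order.coheight_anti
    (hIJ.trans (le_colon_colon I J))))).not_ge hle

theorem colon_maximalIdeal_sq_eq [IsNoetherianRing R] [IsArtinianRing (R ⧸ I)]
    (hI : I.IsIrreducibleIdeal) (hm : ∀ ξ ∈ maximalIdeal R, ¬ maximalIdeal R ≤ span {ξ} ⊔ I) :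
    I.colon (maximalIdeal R) ^ 2 = I * I.colon (maximalIdeal R) := by
  obtain ⟨T, hT⟩ := exists_maximalIdeal_pow_le_of_isArtinianRing_quotient I
  have hL : ¬ ⊤ ≤ I.colon (maximalIdeal R) := fun h => hm 0 (zero_mem _) fun r hr => by
    simpa using mem_colon_iff_mul.mp (h (Submodule.mem_top (x := 1))) r hr
  obtain ⟨a, -, haL, ha⟩ :=
    exists_mem_colon_notMem_of_pow_mul_le (mul_le_left.trans (hT.trans le_colon)) hL
  obtain ⟨x, hx, hax⟩ : ∃ x ∈ maximalIdeal R, a * x ∉ I := by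
    simpa [mem_colon_iff_mul] using haL
  have hzL : a * x ∈ I.colon (maximalIdeal R) := mem_colon_iff_mul.mp ha x hx
  obtain ⟨y, hy, hyx⟩ := SetLike.not_le_iff_exists.mp (hm x hx)
  have hP : I < span {y} * I.colon (span {x}) ⊔ I := by
    refine lt_of_le_of_ne le_sup_right fun h => hyx ?_
    rw [← hI.colon_colon_eq (le_sup_right : I ≤ span {x} ⊔ I), colon_span_singleton_sup,
      show I.colon (I : Set R) = ⊤ by simp, inf_top_eq]
    refine mem_colon_iff_mul.mpr fun c hc => ?_
    rw [h]
    exact mem_sup_left (mul_mem_mul (mem_span_singleton_self y) hc)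
  obtain ⟨_, hp, i, hi, hzi⟩ := Submodule.mem_sup.mp (hI.colon_maximalIdeal_le hP hzL)
  obtain ⟨c, hc, rfl⟩ := mem_span_singleton_mul.mp hp
  refine sq_eq_mul_of_eq_span_sup (hI.colon_maximalIdeal_eq hzL hax) ?_
  have hzz : a * x * (a * x) = c * x * (a * y) + i * (a * x) := by
    linear_combination (-(a * x)) * hzi
  rw [hzz]
  exact add_mem (mul_mem_mul (mem_colon_span_singleton.mp hc) (mem_colon_iff_mul.mp ha y hy))
    (mul_mem_mul hi hzL)

end IsIrreducibleIdeal

end IsLocalRing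

end Ideal

/-- **Theorem.** Let `(R, m)` be a Noetherian local ring and `I` an `m`-primary ideal with
`R ⧸ I` Gorenstein (equivalently, `I` irreducible). Then either `I = (x_1, …, x_{n-1},
x_n ^ s)` for some minimal generating set `x_1, …, x_n` of `m` and some `s ≥ 1`, or
`L² = I L` where `L = I : m`. -/
theorem goto_type_or_reduction_number_one
    {R : Type*} [CommRing R] [IsLocalRing R] [IsNoetherianRing R]
    (I : Ideal R) (hprim : I.radical = IsLocalRing.maximalIdeal R)
    (hgor : I.IsIrreducibleIdeal) :
    (∃ (n : ℕ) (x : Fin n → R) (s : ℕ), 1 ≤ s ∧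
        Ideal.span (Set.range x) = IsLocalRing.maximalIdeal R ∧
        (∀ i, x i ∉ Ideal.span (x '' {j | j ≠ i})) ∧
        I = Ideal.span (Set.range fun i : Fin n =>
          if (i : ℕ) + 1 = n then x i ^ s else x i)) ∨
      (Submodule.colon I (IsLocalRing.maximalIdeal R)) ^ 2 =
        I * Submodule.colon I (IsLocalRing.maximalIdeal R) := by
  have : IsArtinianRing (R ⧸ I) := quotient_artinian_of_mem_minimalPrimes_of_isLocalRing I <| by
    rw [← Ideal.radical_minimalPrimes, hprim, Ideal.minimalPrimes_eq_subsingleton_self]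
    rfl
  by_cases h : ∃ ξ ∈ maximalIdeal R, maximalIdeal R ≤ Ideal.span {ξ} ⊔ I
  · obtain ⟨ξ, hξ, hm⟩ := h
    exact Or.inl (Ideal.exists_generators_of_maximalIdeal_le_span_sup hgor.1 hξ hm)
  · push Not at h
    exact Or.inr (hgor.colon_maximalIdeal_sq_eq h)
end

section
/- Let R be a Cohen–Macaulay (Noetherian) local ring and let a, b be a regular sequence in R, with J = (a, b). Then for every n ≥ 1 there is an isomorphism of R-modules J^{n-1}/(J^{n-1}·\bar{J}) ≅ (R/\bar{J})^n, where \bar{J} is the integral closure of J. -/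
universe u

/-- An element `x` of `R` is integral over an ideal `I` if it satisfies an equation
`x ^ n + a 1 * x ^ (n - 1) + ⋯ + a n = 0` with `a i ∈ I ^ i`. -/
def Ideal.IsIntegralElement {R : Type*} [CommRing R] (I : Ideal R) (x : R) : Prop :=
  ∃ n : ℕ, 0 < n ∧ ∃ a : ℕ → R,
    (∀ i ∈ Finset.Icc 1 n, a i ∈ I ^ i) ∧
    x ^ n + ∑ i ∈ Finset.Icc 1 n, a i * x ^ (n - i) = 0

/-- An ideal is integrally closed if every element integral over it belongs to it. -/
def Ideal.IsIntegrallyClosedIdeal {R : Type*} [CommRing R] (I : Ideal R) : Prop :=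
  ∀ x : R, I.IsIntegralElement x → x ∈ I

/-- The integral closure of an ideal, as an ideal. -/
noncomputable def Ideal.integralClosureIdeal {R : Type*} [CommRing R] (I : Ideal R) : Ideal R :=
  Ideal.span {x | I.IsIntegralElement x}

/-- A Noetherian local ring is Cohen--Macaulay if it admits a regular sequence of
nonunits whose length equals its Krull dimension (i.e. depth = dimension). -/
def IsCohenMacaulayLocalRing (R : Type*) [CommRing R] : Prop :=
  IsLocalRing R ∧ IsNoetherianRing R ∧
    ∃ rs : List R, (∀ r ∈ rs, ¬IsUnit r) ∧ RingTheory.Sequence.IsRegular R rs ∧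
      (rs.length : WithBot ℕ∞) = ringKrullDim R

/-!
Two-element regular sequences are quasi-regular: the monomials `a ^ i * b ^ (m - i)` generate
`J ^ m`, and every relation `∑ cᵢ aⁱ bᵐ⁻ⁱ = 0` has all its coefficients in `J`. Hence the
presentation `R ^ (m + 1) → J ^ m` has kernel inside `J • R ^ (m + 1) ⊆ Ī • R ^ (m + 1)`, and
reducing it modulo `Ī` gives `J ^ m / Ī J ^ m ≅ (R ⧸ Ī) ^ (m + 1)`.
-/

theorem Ideal.le_integralClosureIdeal {R : Type*} [CommRing R] (I : Ideal R) :
    I ≤ I.integralClosureIdeal := by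
  intro x hx
  refine Ideal.subset_span ⟨1, one_pos, fun _ => -x, fun i hi => ?_, by simp⟩
  obtain rfl : i = 1 := by simpa using hi
  simpa using I.neg_mem hx

section QuotientOfRange

open Pointwise

variable {R M N : Type*} [CommRing R] [AddCommGroup M] [Module R M] [AddCommGroup N] [Module R N]

theorem Submodule.ideal_smul_top_pi {ι : Type*} [Fintype ι] (I : Ideal R) :
    I • (⊤ : Submodule R (ι → R)) = Submodule.pi Set.univ fun _ => (I : Submodule R R) := by
  refine le_antisymm (Submodule.smul_le.mpr fun r hr x _ i _ => I.mul_mem_right (x i) hr) ?_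
  classical
  intro c hc
  rw [← Finset.univ_sum_single c]
  refine Submodule.sum_mem _ fun i _ => ?_
  rw [← mul_one (c i), ← smul_eq_mul, Pi.single_smul']
  exact Submodule.smul_mem_smul (hc i trivial) trivial

noncomputable def LinearMap.mapMkQRangeEquivOfKerLE (L : M →ₗ[R] N) (I : Ideal R)
    (h : LinearMap.ker L ≤ I • ⊤) :
    Submodule.map (I • LinearMap.range L).mkQ (LinearMap.range L) ≃ₗ[R]
      M ⧸ I • (⊤ : Submodule R M) :=
  let ψ := (I • LinearMap.range L).mkQ ∘ₗ L
  have hker : LinearMap.ker ψ = I • ⊤ := by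
    rw [LinearMap.ker_comp, Submodule.ker_mkQ, LinearMap.range_eq_map, ← Submodule.map_smul'',
      Submodule.comap_map_eq, sup_eq_left.mpr h]
  (LinearEquiv.ofEq _ _ (LinearMap.range_comp L _)).symm ≪≫ₗ ψ.quotKerEquivRange.symm ≪≫ₗ
    Submodule.quotEquivOfEq _ _ hker

end QuotientOfRange

section PairMonomial

open RingTheory.Sequence Pointwise

variable {R : Type*} [CommRing R] (a b : R)

def pairMonomial (m : ℕ) (i : Fin (m + 1)) : R := a ^ (i : ℕ) * b ^ (m - i)

@[simp]
theorem pairMonomial_zero (m : ℕ) : pairMonomial a b m 0 = b ^ m := by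
  simp [pairMonomial]

theorem pairMonomial_succ (m : ℕ) (i : Fin (m + 1)) :
    pairMonomial a b (m + 1) i.succ = a * pairMonomial a b m i := by
  simp only [pairMonomial, Fin.val_succ, Nat.add_sub_add_right]
  ring

theorem pairMonomial_castSucc (m : ℕ) (i : Fin (m + 1)) :
    pairMonomial a b (m + 1) i.castSucc = b * pairMonomial a b m i := by
  simp only [pairMonomial, Fin.val_castSucc, Nat.sub_add_comm (Fin.is_le i)]
  ring

theorem pairMonomial_mem_span_pow (m : ℕ) (i : Fin (m + 1)) :
    pairMonomial a b m i ∈ Ideal.span {a, b} ^ m := by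
  have h := Ideal.mul_mem_mul (Ideal.pow_mem_pow (Ideal.subset_span (by simp : a ∈ {a, b})) i)
    (Ideal.pow_mem_pow (Ideal.subset_span (by simp : b ∈ {a, b})) (m - i))
  rwa [← pow_add, Nat.add_sub_cancel' (Fin.is_le i)] at h

theorem span_pair_pow_eq_span_pairMonomial (m : ℕ) :
    Ideal.span {a, b} ^ m = Ideal.span (Set.range (pairMonomial a b m)) := by
  refine le_antisymm ?_
    (Ideal.span_le.mpr <| Set.range_subset_iff.mpr <| pairMonomial_mem_span_pow a b m)
  induction m with
  | zero => exact Submodule.one_le.mpr (Ideal.subset_span ⟨0, by simp⟩)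
  | succ m ih =>
    rw [pow_succ, Ideal.mul_comm]
    refine (Ideal.mul_mono_right ih).trans ?_
    rw [Ideal.span_mul_span', Ideal.span_le]
    rintro _ ⟨x, hx, _, ⟨i, rfl⟩, rfl⟩
    rcases hx with rfl | rfl
    · exact Ideal.subset_span ⟨i.succ, pairMonomial_succ _ _ m i⟩
    · exact Ideal.subset_span ⟨i.castSucc, pairMonomial_castSucc _ _ m i⟩

theorem range_linearCombination_pairMonomial (m : ℕ) :
    LinearMap.range (Fintype.linearCombination R (pairMonomial a b m)) =
      Ideal.span {a, b} ^ m := by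
  rw [Fintype.range_linearCombination, span_pair_pow_eq_span_pairMonomial]

variable {a b}

theorem eq_mul_of_pow_mul_mem_span_singleton (hb : IsSMulRegular (QuotSMulTop a R) b) {k : ℕ}
    {x : R} (hx : b ^ k * x ∈ Ideal.span {a}) : ∃ f, x = a * f := by
  have hmem : b ^ k • x ∈ a • (⊤ : Submodule R R) := by
    rwa [← Submodule.ideal_span_singleton_smul, Ideal.smul_eq_mul, Ideal.mul_top]
  obtain ⟨f, -, hf⟩ :=
    Submodule.mem_smul_pointwise_iff_exists _ _ _ |>.mp
      (mem_of_isSMulRegular_quotient_of_smul_mem (hb.pow k) hmem)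
  exact ⟨f, hf.symm⟩

/-- Induction on `m`: the coefficient of `b ^ (m + 1)` is a multiple `a * f` of `a`, and
cancelling `a` leaves a relation of degree `m` whose coefficient of `b ^ m` is shifted by
`f * b`. -/
theorem mem_span_pair_of_sum_mul_pairMonomial_eq_zero (ha : IsSMulRegular R a)
    (hb : IsSMulRegular (QuotSMulTop a R) b) {m : ℕ} {c : Fin (m + 1) → R}
    (hc : ∑ i, c i * pairMonomial a b m i = 0) (i : Fin (m + 1)) :
    c i ∈ Ideal.span {a, b} := by
  induction m with
  | zero =>
    rw [Fin.fin_one_eq_zero i]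
    simp_all
  | succ m ih =>
    rw [Fin.sum_univ_succ] at hc
    simp only [pairMonomial_zero, pairMonomial_succ, mul_left_comm _ a, ← Finset.mul_sum] at hc
    obtain ⟨f, hf⟩ : ∃ f, c 0 = a * f :=
      eq_mul_of_pow_mul_mem_span_singleton hb (k := m + 1) (Ideal.mem_span_singleton'.mpr
        ⟨-∑ i : Fin (m + 1), c i.succ * pairMonomial a b m i, by linear_combination -hc⟩)
    have hrest : f * b ^ (m + 1) + ∑ i : Fin (m + 1), c i.succ * pairMonomial a b m i = 0 :=
      ha.right_eq_zero_of_smul (by rw [smul_eq_mul]; linear_combination hc - b ^ (m + 1) * hf)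
    set c' : Fin (m + 1) → R := fun j => c j.succ + if j = 0 then f * b else 0
    have hc' : ∑ j, c' j * pairMonomial a b m j = 0 := by
      simp only [c', add_mul, Finset.sum_add_distrib, ite_mul, zero_mul, Finset.sum_ite_eq',
        Finset.mem_univ, if_true, pairMonomial_zero]
      linear_combination hrest
    have hbJ : b ∈ Ideal.span {a, b} := Ideal.subset_span (by simp)
    refine Fin.cases ?_ (fun j => ?_) i
    · exact hf ▸ Ideal.mul_mem_right f _ (Ideal.subset_span (by simp))
    · have hj : c j.succ = c' j - if j = 0 then f * b else 0 := by simp [c']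
      rw [hj]
      refine Ideal.sub_mem _ (ih hc' j) ?_
      split_ifs
      exacts [Ideal.mul_mem_left _ f hbJ, Ideal.zero_mem _]

theorem ker_linearCombination_pairMonomial_le (h : IsWeaklyRegular R [a, b]) (m : ℕ) :
    LinearMap.ker (Fintype.linearCombination R (pairMonomial a b m)) ≤
      Ideal.span {a, b} • ⊤ := by
  obtain ⟨ha, hb⟩ := (isWeaklyRegular_cons_iff R a [b]).mp h
  rw [isWeaklyRegular_singleton_iff] at hb
  intro c hc
  rw [Submodule.ideal_smul_top_pi]
  exact fun i _ => mem_span_pair_of_sum_mul_pairMonomial_eq_zero ha hb hc i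

end PairMonomial

theorem power_quotient_iso_of_complete_intersection_general
    {R : Type*} [CommRing R]
    (a b : R) (hreg : RingTheory.Sequence.IsRegular R [a, b])
    (J : Ideal R) (hJ : J = Ideal.span {a, b}) :
    ∀ n : ℕ, 1 ≤ n →
      Nonempty
        ((Submodule.map
            (Submodule.mkQ ((J ^ (n - 1) * J.integralClosureIdeal : Ideal R) : Submodule R R))
            ((J ^ (n - 1) : Ideal R) : Submodule R R)) ≃ₗ[R]
          (Fin n → R ⧸ J.integralClosureIdeal)) := by
  intro n hn
  obtain ⟨m, rfl⟩ := Nat.exists_eq_add_of_le' hn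
  subst hJ
  set L := Fintype.linearCombination R (pairMonomial a b m)
  have hker : LinearMap.ker L ≤ (Ideal.span {a, b}).integralClosureIdeal • ⊤ :=
    (ker_linearCombination_pairMonomial_le hreg.toIsWeaklyRegular m).trans
      (Submodule.smul_mono_left (Ideal.le_integralClosureIdeal _))
  rw [Nat.add_sub_cancel, ← range_linearCombination_pairMonomial, mul_comm, ← smul_eq_mul]
  exact ⟨L.mapMkQRangeEquivOfKerLE _ hker ≪≫ₗ
    Submodule.quotEquivOfEq _ _ (Submodule.ideal_smul_top_pi _) ≪≫ₗ Submodule.quotientPi _⟩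

/-- **Claim (within Theorem 4.1).** Let `R` be a Cohen–Macaulay Noetherian local ring,
`a, b` a regular sequence, `J = (a, b)`. For every `n ≥ 1`,
`J^{n-1} / (J^{n-1} ī) ≅ (R ⧸ ī)^n` as `R`-modules, where `ī` is the integral closure
of `J`. Here `J^{n-1} / (J^{n-1} ī)` is realized as the image of `J^{n-1}` in
`R ⧸ (J^{n-1} ī)`. -/
theorem power_quotient_iso_of_complete_intersection
    {R : Type*} [CommRing R] [IsLocalRing R] [IsNoetherianRing R]
    (hCM : IsCohenMacaulayLocalRing R)
    (a b : R) (hreg : RingTheory.Sequence.IsRegular R [a, b])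
    (J : Ideal R) (hJ : J = Ideal.span {a, b}) :
    ∀ n : ℕ, 1 ≤ n →
      Nonempty
        ((Submodule.map
            (Submodule.mkQ ((J ^ (n - 1) * J.integralClosureIdeal : Ideal R) : Submodule R R))
            ((J ^ (n - 1) : Ideal R) : Submodule R R)) ≃ₗ[R]
          (Fin n → R ⧸ J.integralClosureIdeal)) :=
  power_quotient_iso_of_complete_intersection_general a b hreg J hJ
end

section
/- Let k be a field of characteristic zero and let J = (x³ + y⁶, xy³ − y⁵) in the polynomial ring R = k[x, y]. Then the integral closure of J is \bar{J} = (xy³ − y⁵, y⁶, x³, x²y²). -/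
universe u

set_option synthInstance.maxHeartbeats 1000000
set_option maxHeartbeats 4000000

section ReesAux

open Polynomial

variable {R : Type*} [CommRing R]

theorem IntClosAux.isIntegral_rees_of_isIntegralElement {I : Ideal R} {r : R}
    (h : I.IsIntegralElement r) :
    IsIntegral (reesAlgebra I) (Polynomial.C r * Polynomial.X) := by
  classical
  obtain ⟨n, hn, a, ha, heq⟩ := h
  set A : ℕ → reesAlgebra I := fun i =>
    if h : a i ∈ I ^ i then ⟨monomial i (a i), reesAlgebra.monomial_mem.2 h⟩ else 0 with hA
  refine ⟨X ^ n + ∑ i ∈ Finset.Icc 1 n, Polynomial.C (A i) * X ^ (n - i), ?_, ?_⟩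
  · apply monic_X_pow_add
    refine lt_of_le_of_lt (degree_sum_le _ _) ?_
    rw [Finset.sup_lt_iff (by exact_mod_cast WithBot.bot_lt_coe n)]
    intro i hi
    simp only [Finset.mem_Icc] at hi
    refine lt_of_le_of_lt (degree_C_mul_X_pow_le _ _) ?_
    exact_mod_cast Nat.sub_lt_of_pos_le hi.1 hi.2
  · rw [← aeval_def]
    have key : ∀ i ∈ Finset.Icc 1 n,
        ((algebraMap (reesAlgebra I) R[X]) (A i)) * (Polynomial.C r * X) ^ (n - i)
          = Polynomial.C (a i * r ^ (n - i)) * X ^ n := by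
      intro i hi
      simp only [Finset.mem_Icc] at hi
      have hAi : ((algebraMap (reesAlgebra I) R[X]) (A i)) = monomial i (a i) := by
        simp only [hA, dif_pos (ha i (Finset.mem_Icc.2 hi))]
        rfl
      rw [hAi, ← C_mul_X_pow_eq_monomial, mul_pow, ← C_pow,
        show Polynomial.C (a i) * X ^ i * (Polynomial.C (r ^ (n-i)) * X ^ (n - i))
          = Polynomial.C (a i) * Polynomial.C (r ^ (n-i)) * X ^ (i + (n - i)) by ring,
        Nat.add_sub_cancel' hi.2, ← C_mul]
    rw [map_add, map_pow, map_sum]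
    simp only [map_mul, map_pow, aeval_X, aeval_C]
    rw [Finset.sum_congr rfl key, ← Finset.sum_mul, ← map_sum Polynomial.C,
      mul_pow, ← C_pow, ← add_mul, ← C_add, heq, map_zero, zero_mul]

theorem IntClosAux.isIntegralElement_of_isIntegral_rees [Nontrivial R] {I : Ideal R} {r : R}
    (h : IsIntegral (reesAlgebra I) (Polynomial.C r * Polynomial.X)) :
    I.IsIntegralElement r := by
  obtain ⟨p, hp, hev⟩ := h
  rw [← aeval_def] at hev
  set n := p.natDegree with hn
  have hn1 : 0 < n := by
    rcases Nat.eq_zero_or_pos n with h0 | h1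
    · exfalso
      have hp1 : p = 1 := hp.natDegree_eq_zero.1 h0
      rw [hp1, map_one] at hev
      exact one_ne_zero hev
    · exact h1
  refine ⟨n, hn1, fun j => ((p.coeff (n - j) : R[X])).coeff j, fun i _ => (p.coeff (n - i)).2 i, ?_⟩
  have hev' : ∑ i ∈ Finset.range (n + 1),
      ((p.coeff i : R[X])) * (Polynomial.C r * X) ^ i = 0 := by
    rw [← hev, aeval_eq_sum_range]
    refine Finset.sum_congr rfl fun i _ => ?_
    rw [Algebra.smul_def]
    rfl
  have hco := congrArg (fun q => Polynomial.coeff q n) hev'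
  simp only [finset_sum_coeff, coeff_zero] at hco
  have hterm : ∀ i ∈ Finset.range (n + 1),
      (((p.coeff i : R[X])) * (Polynomial.C r * X) ^ i).coeff n
        = ((p.coeff i : R[X])).coeff (n - i) * r ^ i := by
    intro i hi
    simp only [Finset.mem_range] at hi
    rw [mul_pow, ← C_pow, show ((p.coeff i : R[X])) * (Polynomial.C (r ^ i) * X ^ i)
        = ((p.coeff i : R[X])) * Polynomial.C (r ^ i) * X ^ i by ring,
      coeff_mul_X_pow', if_pos (by omega), coeff_mul_C]
  rw [Finset.sum_congr rfl hterm, Finset.sum_range_succ] at hco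
  have hlead : ((p.coeff n : R[X])).coeff (n - n) * r ^ n = r ^ n := by
    have : p.coeff n = 1 := hp.coeff_natDegree
    rw [this, Nat.sub_self]
    norm_num
  rw [hlead] at hco
  have hre : ∑ i ∈ Finset.range n, ((p.coeff i : R[X])).coeff (n - i) * r ^ i
      = ∑ j ∈ Finset.Icc 1 n, ((p.coeff (n - j) : R[X])).coeff j * r ^ (n - j) := by
    refine Finset.sum_nbij' (fun i => n - i) (fun j => n - j) ?_ ?_ ?_ ?_ ?_
    · intro i hi; simp only [Finset.mem_range] at hi; simp only [Finset.mem_Icc]; omega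
    · intro j hj; simp only [Finset.mem_Icc] at hj; simp only [Finset.mem_range]; omega
    · intro i hi; simp only [Finset.mem_range] at hi; omega
    · intro j hj; simp only [Finset.mem_Icc] at hj; omega
    · intro i hi; simp only [Finset.mem_range] at hi
      rw [Nat.sub_sub_self (by omega)]
  rw [hre] at hco
  rw [add_comm] at hco
  exact hco

end ReesAux

namespace IntClosAux

open MvPolynomial

variable {k : Type u} [Field k]

/-- weighted degree of an exponent vector -/
def wdeg (w0 w1 : ℕ) (s : Fin 2 →₀ ℕ) : ℕ := w0 * s 0 + w1 * s 1

theorem wdeg_add (w0 w1 : ℕ) (s t : Fin 2 →₀ ℕ) :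
    wdeg w0 w1 (s + t) = wdeg w0 w1 s + wdeg w0 w1 t := by
  simp only [wdeg, Finsupp.add_apply]; ring

/-- the ideal of polynomials all of whose monomials have weighted degree ≥ c -/
def wIdeal (k : Type u) [Field k] (w0 w1 c : ℕ) : Ideal (MvPolynomial (Fin 2) k) where
  carrier := {p | ∀ s ∈ p.support, c ≤ wdeg w0 w1 s}
  add_mem' := by
    intro a b ha hb s hs
    rcases Finset.mem_union.1 (MvPolynomial.support_add hs) with h | h
    exacts [ha s h, hb s h]
  zero_mem' := by intro s hs; simp at hs
  smul_mem' := by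
    intro a p hp s hs
    rw [smul_eq_mul] at hs
    obtain ⟨u, hu, v, hv, rfl⟩ := Finset.mem_add.1 (MvPolynomial.support_mul a p hs)
    rw [wdeg_add]
    exact le_add_of_le_right (hp v hv)

theorem mem_wIdeal_iff {w0 w1 c : ℕ} {p : MvPolynomial (Fin 2) k} :
    p ∈ wIdeal k w0 w1 c ↔ ∀ s ∈ p.support, c ≤ wdeg w0 w1 s := Iff.rfl

theorem wIdeal_mono {w0 w1 c c' : ℕ} (h : c ≤ c') :
    wIdeal k w0 w1 c' ≤ wIdeal k w0 w1 c :=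
  fun _ hp s hs => le_trans h (hp s hs)

theorem mem_wIdeal_mul {w0 w1 c d : ℕ} {p q : MvPolynomial (Fin 2) k}
    (hp : p ∈ wIdeal k w0 w1 c) (hq : q ∈ wIdeal k w0 w1 d) :
    p * q ∈ wIdeal k w0 w1 (c + d) := by
  intro s hs
  obtain ⟨u, hu, v, hv, rfl⟩ := Finset.mem_add.1 (MvPolynomial.support_mul p q hs)
  rw [wdeg_add]
  exact add_le_add (hp u hu) (hq v hv)

theorem pow_le_wIdeal {w0 w1 c : ℕ} {B : Ideal (MvPolynomial (Fin 2) k)}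
    (hB : B ≤ wIdeal k w0 w1 c) (i : ℕ) : B ^ i ≤ wIdeal k w0 w1 (c * i) := by
  induction i with
  | zero => intro p _; intro s _; simp
  | succ m ih =>
      rw [pow_succ]
      refine Ideal.mul_le.2 fun r hr t ht => ?_
      have := mem_wIdeal_mul (ih hr) (hB ht)
      rw [show c * (m + 1) = c * m + c by ring]
      exact this

/-- the weighting homomorphism into polynomials in one more variable -/
noncomputable def Phi (k : Type u) [Field k] (w0 w1 : ℕ) :
    MvPolynomial (Fin 2) k →ₐ[k] Polynomial (MvPolynomial (Fin 2) k) :=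
  MvPolynomial.aeval fun i =>
    Polynomial.X ^ (if i = (0 : Fin 2) then w0 else w1) * Polynomial.C (MvPolynomial.X i)

theorem fin2_decomp (s : Fin 2 →₀ ℕ) :
    s = Finsupp.single 0 (s 0) + Finsupp.single 1 (s 1) := by
  ext i
  fin_cases i <;> simp [Finsupp.single_apply]

theorem monomial_eq_prod (s : Fin 2 →₀ ℕ) (c : k) :
    (monomial s c : MvPolynomial (Fin 2) k) = C c * X 0 ^ (s 0) * X 1 ^ (s 1) := by
  conv_lhs => rw [fin2_decomp s]
  rw [monomial_single_add, show (Finsupp.single (1 : Fin 2) (s 1)) =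
      Finsupp.single (1 : Fin 2) (s 1) + 0 by simp, monomial_single_add, monomial_zero']
  ring

theorem Phi_monomial (w0 w1 : ℕ) (s : Fin 2 →₀ ℕ) (c : k) :
    Phi k w0 w1 (monomial s c)
      = Polynomial.C (monomial s c) * Polynomial.X ^ (wdeg w0 w1 s) := by
  conv_lhs => rw [monomial_eq_prod]
  simp only [Phi, map_mul, map_pow, MvPolynomial.aeval_X, MvPolynomial.aeval_C,
    Polynomial.algebraMap_apply, MvPolynomial.algebraMap_eq]
  rw [if_pos trivial, if_neg (by decide)]
  rw [monomial_eq_prod, mul_pow, mul_pow, ← Polynomial.C_pow, ← Polynomial.C_pow,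
    ← pow_mul, ← pow_mul, Polynomial.C_mul, Polynomial.C_mul]
  rw [wdeg]
  ring

theorem coeff_Phi_ne_zero {w0 w1 : ℕ} {p : MvPolynomial (Fin 2) k} {s : Fin 2 →₀ ℕ}
    (hs : s ∈ p.support) : (Phi k w0 w1 p).coeff (wdeg w0 w1 s) ≠ 0 := by
  intro h0
  rw [show p = ∑ v ∈ p.support, monomial v (coeff v p) from
      (support_sum_monomial_coeff p).symm, map_sum] at h0
  simp only [Phi_monomial, Polynomial.finset_sum_coeff, Polynomial.coeff_C_mul,
    Polynomial.coeff_X_pow, mul_ite, mul_one, mul_zero] at h0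
  have := congrArg (MvPolynomial.coeff s) h0
  rw [MvPolynomial.coeff_sum, Finset.sum_eq_single s (fun v _ hv => by
      split_ifs <;> simp [MvPolynomial.coeff_monomial, hv]) (fun h => absurd hs h)] at this
  rw [if_pos rfl, MvPolynomial.coeff_monomial, if_pos rfl, MvPolynomial.coeff_zero] at this
  exact (MvPolynomial.mem_support_iff.1 hs) this

theorem mem_wIdeal_iff_coeff {w0 w1 c : ℕ} {p : MvPolynomial (Fin 2) k} :
    p ∈ wIdeal k w0 w1 c ↔ ∀ d < c, (Phi k w0 w1 p).coeff d = 0 := by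
  constructor
  · intro hp d hd
    rw [show p = ∑ v ∈ p.support, monomial v (coeff v p) from
        (support_sum_monomial_coeff p).symm, map_sum]
    simp only [Phi_monomial, Polynomial.finset_sum_coeff, Polynomial.coeff_C_mul,
      Polynomial.coeff_X_pow, mul_ite, mul_one, mul_zero]
    refine Finset.sum_eq_zero fun v hv => ?_
    rw [if_neg]
    have := hp v hv
    omega
  · intro h s hs
    by_contra hlt
    push_neg at hlt
    exact coeff_Phi_ne_zero hs (h _ hlt)

theorem Phi_ne_zero {w0 w1 : ℕ} {p : MvPolynomial (Fin 2) k} (hp : p ≠ 0) :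
    Phi k w0 w1 p ≠ 0 := by
  obtain ⟨s, hs⟩ := MvPolynomial.support_nonempty.2 hp
  intro h0
  exact coeff_Phi_ne_zero hs (by rw [h0, Polynomial.coeff_zero])

theorem natTrailingDegree_pow {S : Type*} [CommRing S] [IsDomain S] {P : Polynomial S}
    (hP : P ≠ 0) (n : ℕ) : (P ^ n).natTrailingDegree = n * P.natTrailingDegree := by
  induction n with
  | zero => simp
  | succ m ih =>
      rw [pow_succ, Polynomial.natTrailingDegree_mul (pow_ne_zero m hP) hP, ih]
      ring

/-- Main valuation lemma: elements integral over `B ≤ wIdeal c` lie in `wIdeal c`. -/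
theorem integral_mem_wIdeal {w0 w1 c n : ℕ} (hn : 0 < n)
    {B : Ideal (MvPolynomial (Fin 2) k)} (hB : B ≤ wIdeal k w0 w1 c)
    {b : ℕ → MvPolynomial (Fin 2) k} (hb : ∀ i ∈ Finset.Icc 1 n, b i ∈ B ^ i)
    {q : MvPolynomial (Fin 2) k}
    (heq : q ^ n + ∑ i ∈ Finset.Icc 1 n, b i * q ^ (n - i) = 0) :
    q ∈ wIdeal k w0 w1 c := by
  by_cases hq : q = 0
  · subst hq; exact (wIdeal k w0 w1 c).zero_mem
  have hPne : Phi k w0 w1 q ≠ 0 := Phi_ne_zero hq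
  set e := (Phi k w0 w1 q).natTrailingDegree with he
  have hqe : q ∈ wIdeal k w0 w1 e :=
    mem_wIdeal_iff_coeff.2 fun d hd => Polynomial.coeff_eq_zero_of_lt_natTrailingDegree hd
  rcases le_or_gt c e with hce | hec
  · exact wIdeal_mono hce hqe
  exfalso
  have hS : (∑ i ∈ Finset.Icc 1 n, b i * q ^ (n - i)) ∈ wIdeal k w0 w1 (e * (n - 1) + c) := by
    refine Ideal.sum_mem _ fun i hi => ?_
    simp only [Finset.mem_Icc] at hi
    have h1 : b i ∈ wIdeal k w0 w1 (c * i) := pow_le_wIdeal hB i (hb i (Finset.mem_Icc.2 hi))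
    have h2 : q ^ (n - i) ∈ wIdeal k w0 w1 (e * (n - i)) :=
      pow_le_wIdeal (le_refl (wIdeal k w0 w1 e)) (n - i) (Ideal.pow_mem_pow hqe (n - i))
    refine wIdeal_mono ?_ (mem_wIdeal_mul h1 h2)
    obtain ⟨i', rfl⟩ : ∃ i', i = 1 + i' := ⟨i - 1, by omega⟩
    obtain ⟨m, rfl⟩ : ∃ m, n = m + (1 + i') := ⟨n - (1 + i'), by omega⟩
    have h3 : m + (1 + i') - (1 + i') = m := by omega
    have h4 : m + (1 + i') - 1 = m + i' := by omega
    rw [h3, h4]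
    nlinarith [Nat.mul_le_mul_right i' (le_of_lt hec)]
  have hlt : n * e < e * (n - 1) + c := by
    rw [mul_comm n e]
    have : e * (n - 1) + e = e * n := by
      obtain ⟨m, rfl⟩ : ∃ m, n = m + 1 := ⟨n - 1, by omega⟩
      simp [Nat.add_sub_cancel]; ring
    omega
  have hc0 : (Phi k w0 w1 (∑ i ∈ Finset.Icc 1 n, b i * q ^ (n - i))).coeff (n * e) = 0 :=
    mem_wIdeal_iff_coeff.1 hS _ hlt
  have hqn : (Phi k w0 w1 (q ^ n)).coeff (n * e) ≠ 0 := by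
    rw [map_pow]
    rw [show n * e = ((Phi k w0 w1 q) ^ n).natTrailingDegree from by
      rw [natTrailingDegree_pow hPne]]
    exact Polynomial.trailingCoeff_nonzero_iff_nonzero.2 (pow_ne_zero _ hPne)
  apply hqn
  rw [eq_neg_of_add_eq_zero_left heq, map_neg, Polynomial.coeff_neg, hc0, neg_zero]

/-- divisibility helper for membership in (monomial) ideals -/
theorem dvd_helper {Mi : Ideal (MvPolynomial (Fin 2) k)} {ga gb a b : ℕ}
    (h : (X 0 : MvPolynomial (Fin 2) k) ^ ga * X 1 ^ gb ∈ Mi)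
    (h1 : ga ≤ a) (h2 : gb ≤ b) (c : k) :
    C c * X 0 ^ a * X 1 ^ b ∈ Mi := by
  obtain ⟨a2, rfl⟩ : ∃ t, a = t + ga := ⟨a - ga, by omega⟩
  obtain ⟨b2, rfl⟩ : ∃ t, b = t + gb := ⟨b - gb, by omega⟩
  rw [show (C c : MvPolynomial (Fin 2) k) * X 0 ^ (a2 + ga) * X 1 ^ (b2 + gb)
      = (C c * X 0 ^ a2 * X 1 ^ b2) * (X 0 ^ ga * X 1 ^ gb) by ring]
  exact Ideal.mul_mem_left _ _ h

theorem pow_mem_wIdeal {w0 w1 c : ℕ} (a b : ℕ) (h : c ≤ w0 * a + w1 * b) :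
    (X 0 : MvPolynomial (Fin 2) k) ^ a * X 1 ^ b ∈ wIdeal k w0 w1 c := by
  rw [mem_wIdeal_iff]
  intro s hs
  have hX : (X 0 : MvPolynomial (Fin 2) k) ^ a * X 1 ^ b
      = monomial (Finsupp.single 0 a + Finsupp.single 1 b) 1 := by
    rw [monomial_eq_prod]
    simp [Finsupp.single_apply]
  classical
  rw [hX, MvPolynomial.support_monomial] at hs
  simp only [one_ne_zero, if_false, Finset.mem_singleton] at hs
  subst hs
  simpa [wdeg, Finsupp.single_apply] using h

/-- substitution x ↦ x + y² -/
noncomputable def Tsub (k : Type u) [Field k] :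
    MvPolynomial (Fin 2) k →ₐ[k] MvPolynomial (Fin 2) k :=
  MvPolynomial.aeval ![X 0 + X 1 ^ 2, X 1]

/-- substitution x ↦ x - y² -/
noncomputable def Usub (k : Type u) [Field k] :
    MvPolynomial (Fin 2) k →ₐ[k] MvPolynomial (Fin 2) k :=
  MvPolynomial.aeval ![X 0 - X 1 ^ 2, X 1]

theorem Usub_Tsub (p : MvPolynomial (Fin 2) k) : Usub k (Tsub k p) = p := by
  have hcomp : (Usub k).comp (Tsub k) = AlgHom.id k _ := by
    apply MvPolynomial.algHom_ext
    intro i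
    fin_cases i <;> simp [Tsub, Usub]
  exact AlgHom.congr_fun hcomp p

end IntClosAux

theorem IntClosAux.mem_span_four {R : Type*} [CommRing R] {g1 g2 g3 g4 z : R}
    (c1 c2 c3 c4 : R) (h : z = c1 * g1 + c2 * g2 + c3 * g3 + c4 * g4) :
    z ∈ Ideal.span {g1, g2, g3, g4} := by
  subst h
  have m1 : g1 ∈ Ideal.span {g1, g2, g3, g4} := Ideal.subset_span (by simp)
  have m2 : g2 ∈ Ideal.span {g1, g2, g3, g4} := Ideal.subset_span (by simp)
  have m3 : g3 ∈ Ideal.span {g1, g2, g3, g4} := Ideal.subset_span (by simp)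
  have m4 : g4 ∈ Ideal.span {g1, g2, g3, g4} := Ideal.subset_span (by simp)
  exact add_mem (add_mem (add_mem (Ideal.mul_mem_left _ _ m1) (Ideal.mul_mem_left _ _ m2))
    (Ideal.mul_mem_left _ _ m3)) (Ideal.mul_mem_left _ _ m4)

open IntClosAux MvPolynomial in
/-- **Example 4.3.** In `R = k[x, y]` with `char k = 0`, the integral closure of
`J = (x³ + y⁶, x y³ − y⁵)` is `(x y³ − y⁵, y⁶, x³, x² y²)`. -/
theorem integral_closure_of_binomial_complete_intersection
    {k : Type*} [Field k] [CharZero k]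
    (x y : MvPolynomial (Fin 2) k) (hx : x = MvPolynomial.X 0) (hy : y = MvPolynomial.X 1)
    (J : Ideal (MvPolynomial (Fin 2) k))
    (hJ : J = Ideal.span {x ^ 3 + y ^ 6, x * y ^ 3 - y ^ 5}) :
    {r | J.IsIntegralElement r} =
      (Ideal.span {x * y ^ 3 - y ^ 5, y ^ 6, x ^ 3, x ^ 2 * y ^ 2} :
        Set (MvPolynomial (Fin 2) k)) := by
  subst hx hy hJ
  ext r
  simp only [Set.mem_setOf_eq, SetLike.mem_coe]
  constructor
  · -- forward inclusion, via weighted valuations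
    rintro ⟨n, hn, a, ha, heq⟩
    have heqT : (Tsub k r) ^ n
        + ∑ i ∈ Finset.Icc 1 n, (Tsub k (a i)) * (Tsub k r) ^ (n - i) = 0 := by
      have h0 := congrArg (Tsub k) heq
      simpa only [map_add, map_pow, map_sum, map_mul, map_zero] using h0
    set Jm : Ideal (MvPolynomial (Fin 2) k) := Ideal.map (Tsub k)
      (Ideal.span {(X 0 : MvPolynomial (Fin 2) k) ^ 3 + X 1 ^ 6,
        X 0 * X 1 ^ 3 - X 1 ^ 5}) with hJm
    have hmem : ∀ i ∈ Finset.Icc 1 n, Tsub k (a i) ∈ Jm ^ i := by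
      intro i hi
      rw [hJm, ← Ideal.map_pow]
      exact Ideal.mem_map_of_mem _ (ha i hi)
    have hTf : Tsub k ((X 0 : MvPolynomial (Fin 2) k) ^ 3 + X 1 ^ 6)
        = X 0 ^ 3 * X 1 ^ 0 + 3 * (X 0 ^ 2 * X 1 ^ 2) + 3 * (X 0 ^ 1 * X 1 ^ 4)
          + 2 * (X 0 ^ 0 * X 1 ^ 6) := by
      simp only [Tsub, map_add, map_mul, map_pow, MvPolynomial.aeval_X,
        Matrix.cons_val_zero, Matrix.cons_val_one, Matrix.head_cons]
      ring
    have hTg : Tsub k ((X 0 : MvPolynomial (Fin 2) k) * X 1 ^ 3 - X 1 ^ 5)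
        = X 0 ^ 1 * X 1 ^ 3 := by
      simp only [Tsub, map_add, map_sub, map_mul, map_pow, MvPolynomial.aeval_X,
        Matrix.cons_val_zero, Matrix.cons_val_one, Matrix.head_cons]
      ring
    have hspan : Jm = Ideal.span
        {Tsub k ((X 0 : MvPolynomial (Fin 2) k) ^ 3 + X 1 ^ 6),
         Tsub k ((X 0 : MvPolynomial (Fin 2) k) * X 1 ^ 3 - X 1 ^ 5)} := by
      rw [hJm, Ideal.map_span, Set.image_insert_eq, Set.image_singleton]
    have hgen1 : Jm ≤ wIdeal k 3 2 9 := by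
      rw [hspan]
      refine Ideal.span_le.2 ?_
      rintro z hz
      simp only [Set.mem_insert_iff, Set.mem_singleton_iff] at hz
      rcases hz with rfl | rfl
      · rw [hTf]
        refine add_mem (add_mem (add_mem ?_ ?_) ?_) ?_
        · exact pow_mem_wIdeal 3 0 (by norm_num)
        · exact Ideal.mul_mem_left _ _ (pow_mem_wIdeal 2 2 (by norm_num))
        · exact Ideal.mul_mem_left _ _ (pow_mem_wIdeal 1 4 (by norm_num))
        · exact Ideal.mul_mem_left _ _ (pow_mem_wIdeal 0 6 (by norm_num))
      · rw [hTg]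
        exact pow_mem_wIdeal 1 3 (by norm_num)
    have hgen2 : Jm ≤ wIdeal k 3 1 6 := by
      rw [hspan]
      refine Ideal.span_le.2 ?_
      rintro z hz
      simp only [Set.mem_insert_iff, Set.mem_singleton_iff] at hz
      rcases hz with rfl | rfl
      · rw [hTf]
        refine add_mem (add_mem (add_mem ?_ ?_) ?_) ?_
        · exact pow_mem_wIdeal 3 0 (by norm_num)
        · exact Ideal.mul_mem_left _ _ (pow_mem_wIdeal 2 2 (by norm_num))
        · exact Ideal.mul_mem_left _ _ (pow_mem_wIdeal 1 4 (by norm_num))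
        · exact Ideal.mul_mem_left _ _ (pow_mem_wIdeal 0 6 (by norm_num))
      · rw [hTg]
        exact pow_mem_wIdeal 1 3 (by norm_num)
    have hq1 : Tsub k r ∈ wIdeal k 3 2 9 := integral_mem_wIdeal hn hgen1 hmem heqT
    have hq2 : Tsub k r ∈ wIdeal k 3 1 6 := integral_mem_wIdeal hn hgen2 hmem heqT
    set M : Ideal (MvPolynomial (Fin 2) k) :=
      Ideal.span {X 0 * X 1 ^ 3, X 1 ^ 6, X 0 ^ 3, X 0 ^ 2 * X 1 ^ 2} with hM
    have hg1M : (X 0 : MvPolynomial (Fin 2) k) ^ 1 * X 1 ^ 3 ∈ M := by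
      rw [pow_one]; exact Ideal.subset_span (by simp)
    have hg2M : (X 0 : MvPolynomial (Fin 2) k) ^ 0 * X 1 ^ 6 ∈ M := by
      rw [pow_zero, one_mul]; exact Ideal.subset_span (by simp)
    have hg3M : (X 0 : MvPolynomial (Fin 2) k) ^ 3 * X 1 ^ 0 ∈ M := by
      rw [pow_zero, mul_one]; exact Ideal.subset_span (by simp)
    have hg4M : (X 0 : MvPolynomial (Fin 2) k) ^ 2 * X 1 ^ 2 ∈ M :=
      Ideal.subset_span (by simp)
    have hqM : Tsub k r ∈ M := by
      rw [show Tsub k r = ∑ s ∈ (Tsub k r).support, monomial s (coeff s (Tsub k r)) from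
        (support_sum_monomial_coeff _).symm]
      refine Ideal.sum_mem _ fun s hs => ?_
      have h1 : 9 ≤ 3 * s 0 + 2 * s 1 := hq1 s hs
      have h2 : 6 ≤ 3 * s 0 + 1 * s 1 := hq2 s hs
      rw [monomial_eq_prod]
      rcases Nat.lt_or_ge (s 0) 3 with h3 | h3
      · rcases Nat.lt_or_ge (s 0) 1 with h0' | h0'
        · exact dvd_helper hg2M (by omega) (by omega) _
        · rcases Nat.lt_or_ge (s 0) 2 with h1' | h2'
          · exact dvd_helper hg1M (by omega) (by omega) _
          · exact dvd_helper hg4M (by omega) (by omega) _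
      · exact dvd_helper hg3M (by omega) (by omega) _
    have hrU : r = Usub k (Tsub k r) := (Usub_Tsub r).symm
    have hUM : Ideal.map (Usub k) M ≤ Ideal.span
        {(X 0 : MvPolynomial (Fin 2) k) * X 1 ^ 3 - X 1 ^ 5, X 1 ^ 6, X 0 ^ 3,
          X 0 ^ 2 * X 1 ^ 2} := by
      rw [hM, Ideal.map_span]
      refine Ideal.span_le.2 ?_
      rintro z hz
      simp only [Set.image_insert_eq, Set.image_singleton, Set.mem_insert_iff,
        Set.mem_singleton_iff] at hz
      rcases hz with rfl | rfl | rfl | rfl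
      · refine mem_span_four 1 0 0 0 ?_
        simp only [Usub, map_add, map_sub, map_mul, map_pow, MvPolynomial.aeval_X,
          Matrix.cons_val_zero, Matrix.cons_val_one, Matrix.head_cons]
        ring
      · refine mem_span_four 0 1 0 0 ?_
        simp only [Usub, map_add, map_sub, map_mul, map_pow, MvPolynomial.aeval_X,
          Matrix.cons_val_zero, Matrix.cons_val_one, Matrix.head_cons]
        ring
      · refine mem_span_four (3 * X 1) 2 1 (-3) ?_
        simp only [Usub, map_add, map_sub, map_mul, map_pow, MvPolynomial.aeval_X,
          Matrix.cons_val_zero, Matrix.cons_val_one, Matrix.head_cons]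
        ring
      · refine mem_span_four (-2 * X 1) (-1) 0 1 ?_
        simp only [Usub, map_add, map_sub, map_mul, map_pow, MvPolynomial.aeval_X,
          Matrix.cons_val_zero, Matrix.cons_val_one, Matrix.head_cons]
        ring
    rw [hrU]
    exact hUM (Ideal.mem_map_of_mem _ hqM)
  · -- reverse inclusion, via the Rees algebra
    intro hr
    have hu : (2 : MvPolynomial (Fin 2) k) * C (2⁻¹ : k) = 1 := by
      have h2 : (2 : MvPolynomial (Fin 2) k) = C (2 : k) := by
        rw [map_ofNat]
      rw [h2, ← C_mul, mul_inv_cancel₀ two_ne_zero, C_1]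
    set Jid : Ideal (MvPolynomial (Fin 2) k) :=
      Ideal.span {X 0 ^ 3 + X 1 ^ 6, X 0 * X 1 ^ 3 - X 1 ^ 5} with hJid
    have hf : (X 0 ^ 3 + X 1 ^ 6 : MvPolynomial (Fin 2) k) ∈ Jid :=
      Ideal.subset_span (by simp)
    have hg : (X 0 * X 1 ^ 3 - X 1 ^ 5 : MvPolynomial (Fin 2) k) ∈ Jid :=
      Ideal.subset_span (by simp)
    have hsq : ∀ u v r' : MvPolynomial (Fin 2) k, u ∈ Jid → v ∈ Jid →
        r' * (u * v) ∈ Jid ^ 2 := by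
      intro u v r' hu' hv'
      rw [pow_two]
      exact Ideal.mul_mem_left _ _ (Ideal.mul_mem_mul hu' hv')
    have hcb : ∀ u v w r' : MvPolynomial (Fin 2) k, u ∈ Jid → v ∈ Jid → w ∈ Jid →
        r' * (u * (v * w)) ∈ Jid ^ 3 := by
      intro u v w r' hu' hv' hw'
      rw [show (3 : ℕ) = 2 + 1 from rfl, pow_succ,
        show r' * (u * (v * w)) = (r' * (v * w)) * u by ring]
      exact Ideal.mul_mem_mul (hsq v w r' hv' hw') hu'
    have wg1 : Jid.IsIntegralElement (X 0 * X 1 ^ 3 - X 1 ^ 5 : MvPolynomial (Fin 2) k) := by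
      refine ⟨1, one_pos, fun _ => -(X 0 * X 1 ^ 3 - X 1 ^ 5), fun i hi => ?_, ?_⟩
      · simp only [Finset.mem_Icc] at hi
        have hi1 : i = 1 := by omega
        subst hi1
        rw [pow_one]
        exact neg_mem hg
      · rw [Finset.Icc_self, Finset.sum_singleton]
        ring
    have wg2 : Jid.IsIntegralElement (X 1 ^ 6 : MvPolynomial (Fin 2) k) := by
      refine ⟨3, by norm_num, fun i =>
        if i = 1 then C (2⁻¹ : k) * ((3 * X 1) * (X 0 * X 1 ^ 3 - X 1 ^ 5) - (X 0 ^ 3 + X 1 ^ 6))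
        else if i = 2 then (C (2⁻¹ : k) * (3 * X 1 ^ 2)) *
          ((X 0 * X 1 ^ 3 - X 1 ^ 5) * (X 0 * X 1 ^ 3 - X 1 ^ 5))
        else (C (2⁻¹ : k) * X 1 ^ 3) *
          ((X 0 * X 1 ^ 3 - X 1 ^ 5) * ((X 0 * X 1 ^ 3 - X 1 ^ 5) * (X 0 * X 1 ^ 3 - X 1 ^ 5))),
        fun i hi => ?_, ?_⟩
      · simp only [Finset.mem_Icc] at hi
        obtain ⟨hi1, hi2⟩ := hi
        interval_cases i
        · simp only [Nat.reduceEqDiff, reduceIte]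
          rw [pow_one]
          exact Ideal.mul_mem_left _ _ (sub_mem (Ideal.mul_mem_left _ _ hg) hf)
        · simp only [Nat.reduceEqDiff, reduceIte]
          exact hsq _ _ _ hg hg
        · simp only [Nat.reduceEqDiff, reduceIte]
          exact hcb _ _ _ _ hg hg hg
      · rw [show Finset.Icc 1 3 = {1, 2, 3} from rfl,
          Finset.sum_insert (by decide), Finset.sum_insert (by decide), Finset.sum_singleton]
        simp only [Nat.reduceEqDiff, reduceIte, Nat.reduceSub, pow_zero, mul_one]
        linear_combination (-((X 1 : MvPolynomial (Fin 2) k) ^ 6) ^ 3) * hu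
    have wg3 : Jid.IsIntegralElement (X 0 ^ 3 : MvPolynomial (Fin 2) k) := by
      refine ⟨3, by norm_num, fun i =>
        if i = 1 then C (2⁻¹ : k) *
          ((-5) * (X 0 ^ 3 + X 1 ^ 6) - (3 * X 1) * (X 0 * X 1 ^ 3 - X 1 ^ 5))
        else if i = 2 then C (2⁻¹ : k) *
          (4 * ((X 0 ^ 3 + X 1 ^ 6) * (X 0 ^ 3 + X 1 ^ 6))
            + (6 * X 1) * ((X 0 ^ 3 + X 1 ^ 6) * (X 0 * X 1 ^ 3 - X 1 ^ 5))
            + (3 * X 1 ^ 2) * ((X 0 * X 1 ^ 3 - X 1 ^ 5) * (X 0 * X 1 ^ 3 - X 1 ^ 5)))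
        else C (2⁻¹ : k) *
          ((-1) * ((X 0 ^ 3 + X 1 ^ 6) * ((X 0 ^ 3 + X 1 ^ 6) * (X 0 ^ 3 + X 1 ^ 6)))
            + (-3 * X 1) * ((X 0 ^ 3 + X 1 ^ 6) * ((X 0 ^ 3 + X 1 ^ 6) * (X 0 * X 1 ^ 3 - X 1 ^ 5)))
            + (-3 * X 1 ^ 2) * ((X 0 ^ 3 + X 1 ^ 6) *
                ((X 0 * X 1 ^ 3 - X 1 ^ 5) * (X 0 * X 1 ^ 3 - X 1 ^ 5)))
            + (-1 * X 1 ^ 3) * ((X 0 * X 1 ^ 3 - X 1 ^ 5) *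
                ((X 0 * X 1 ^ 3 - X 1 ^ 5) * (X 0 * X 1 ^ 3 - X 1 ^ 5)))),
        fun i hi => ?_, ?_⟩
      · simp only [Finset.mem_Icc] at hi
        obtain ⟨hi1, hi2⟩ := hi
        interval_cases i
        · simp only [Nat.reduceEqDiff, reduceIte]
          rw [pow_one]
          exact Ideal.mul_mem_left _ _ (sub_mem (Ideal.mul_mem_left _ _ hf)
            (Ideal.mul_mem_left _ _ hg))
        · simp only [Nat.reduceEqDiff, reduceIte]
          exact Ideal.mul_mem_left _ _ (add_mem (add_mem (hsq _ _ _ hf hf)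
            (hsq _ _ _ hf hg)) (hsq _ _ _ hg hg))
        · simp only [Nat.reduceEqDiff, reduceIte]
          exact Ideal.mul_mem_left _ _ (add_mem (add_mem (add_mem
            (hcb _ _ _ _ hf hf hf) (hcb _ _ _ _ hf hf hg))
            (hcb _ _ _ _ hf hg hg)) (hcb _ _ _ _ hg hg hg))
      · rw [show Finset.Icc 1 3 = {1, 2, 3} from rfl,
          Finset.sum_insert (by decide), Finset.sum_insert (by decide), Finset.sum_singleton]
        simp only [Nat.reduceEqDiff, reduceIte, Nat.reduceSub, pow_zero, mul_one]
        linear_combination (-((X 0 : MvPolynomial (Fin 2) k) ^ 3) ^ 3) * hu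
    have wg4 : Jid.IsIntegralElement (X 0 ^ 2 * X 1 ^ 2 : MvPolynomial (Fin 2) k) := by
      refine ⟨3, by norm_num, fun i =>
        if i = 1 then C (2⁻¹ : k) *
          ((-3 * X 1) * (X 0 * X 1 ^ 3 - X 1 ^ 5) - (X 0 ^ 3 + X 1 ^ 6))
        else if i = 2 then C (2⁻¹ : k) *
          ((X 1 ^ 2) * ((X 0 * X 1 ^ 3 - X 1 ^ 5) * (X 0 * X 1 ^ 3 - X 1 ^ 5))
            + X 0 * ((X 0 * X 1 ^ 3 - X 1 ^ 5) * (X 0 * X 1 ^ 3 - X 1 ^ 5))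
            + (-1 * X 1) * ((X 0 ^ 3 + X 1 ^ 6) * (X 0 * X 1 ^ 3 - X 1 ^ 5)))
        else C (2⁻¹ : k) *
          ((-1 * (X 0 * X 1)) * ((X 0 * X 1 ^ 3 - X 1 ^ 5) *
              ((X 0 * X 1 ^ 3 - X 1 ^ 5) * (X 0 * X 1 ^ 3 - X 1 ^ 5)))
            + (X 1 ^ 2) * ((X 0 ^ 3 + X 1 ^ 6) *
              ((X 0 * X 1 ^ 3 - X 1 ^ 5) * (X 0 * X 1 ^ 3 - X 1 ^ 5)))
            + (X 1) * ((X 0 ^ 3 + X 1 ^ 6) * ((X 0 ^ 3 + X 1 ^ 6) * (X 0 * X 1 ^ 3 - X 1 ^ 5)))),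
        fun i hi => ?_, ?_⟩
      · simp only [Finset.mem_Icc] at hi
        obtain ⟨hi1, hi2⟩ := hi
        interval_cases i
        · simp only [Nat.reduceEqDiff, reduceIte]
          rw [pow_one]
          exact Ideal.mul_mem_left _ _ (sub_mem (Ideal.mul_mem_left _ _ hg) hf)
        · simp only [Nat.reduceEqDiff, reduceIte]
          exact Ideal.mul_mem_left _ _ (add_mem (add_mem (hsq _ _ _ hg hg)
            (hsq _ _ _ hg hg)) (hsq _ _ _ hf hg))
        · simp only [Nat.reduceEqDiff, reduceIte]
          exact Ideal.mul_mem_left _ _ (add_mem (add_mem (hcb _ _ _ _ hg hg hg)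
            (hcb _ _ _ _ hf hg hg)) (hcb _ _ _ _ hf hf hg))
      · rw [show Finset.Icc 1 3 = {1, 2, 3} from rfl,
          Finset.sum_insert (by decide), Finset.sum_insert (by decide), Finset.sum_singleton]
        simp only [Nat.reduceEqDiff, reduceIte, Nat.reduceSub, pow_zero, mul_one]
        linear_combination (-((X 0 : MvPolynomial (Fin 2) k) ^ 2 * X 1 ^ 2) ^ 3) * hu
    have hkey : IsIntegral (reesAlgebra Jid) (Polynomial.C r * Polynomial.X) := by
      refine Submodule.span_induction ?_ ?_ ?_ ?_ hr
      · rintro z hz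
        simp only [Set.mem_insert_iff, Set.mem_singleton_iff] at hz
        rcases hz with rfl | rfl | rfl | rfl
        · exact IntClosAux.isIntegral_rees_of_isIntegralElement wg1
        · exact IntClosAux.isIntegral_rees_of_isIntegralElement wg2
        · exact IntClosAux.isIntegral_rees_of_isIntegralElement wg3
        · exact IntClosAux.isIntegral_rees_of_isIntegralElement wg4
      · rw [map_zero, zero_mul]
        exact isIntegral_zero
      · intro z1 z2 _ _ h1 h2
        rw [map_add, add_mul]
        exact h1.add h2
      · intro c z _ h1
        rw [smul_eq_mul, map_mul, mul_assoc]
        have hc : (Polynomial.C c : Polynomial (MvPolynomial (Fin 2) k)) ∈ reesAlgebra Jid := by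
          simpa using (reesAlgebra Jid).algebraMap_mem c
        have hCc : IsIntegral (reesAlgebra Jid)
            (Polynomial.C c : Polynomial (MvPolynomial (Fin 2) k)) := by
          refine ⟨Polynomial.X - Polynomial.C (⟨Polynomial.C c, hc⟩ : reesAlgebra Jid),
            Polynomial.monic_X_sub_C _, ?_⟩
          rw [← Polynomial.aeval_def, map_sub, Polynomial.aeval_X, Polynomial.aeval_C]
          exact sub_eq_zero_of_eq rfl
        exact hCc.mul h1
    exact IntClosAux.isIntegralElement_of_isIntegral_rees hkey
end

section
/- Let k be a field of characteristic zero and let R = k[x, y, z, w]. Consider the ideal I = (x² − xy, −xy + y², z² − zw, −zw + w²). Then the integral closure of I is \bar{I} = (x² − xy, −xy + y², z² − zw, −zw + w², xz − yz − xw + yw); moreover \bar{I} equals the intersection (x − y, z − w) ∩ (x − y, z², zw, w²) ∩ (z − w, x², xy, y²) of the three height-two primary components of I. -/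
universe u

/-!
In the coordinates `u = x - y`, `y`, `v = z - w`, `w` the ideal is `I = (u², uy, v², vw)`.
For the weights `(1,0,1,0)`, `(2,0,1,1)`, `(1,1,2,0)` on `(u, y, v, w)`, the polynomials of
weighted order at least `1`, `2`, `2` form ideals containing `I`, and these are integrally closed:
the weighted order is the `t`-adic order after the substitution `X i ↦ t ^ c i * X i`, and `t` is
prime. A monomial meeting all three bounds is divisible by one of `u², uy, v², vw, uv`, so the
three ideals meet in `J = I + (uv)`; conversely `uv` is integral over `I` since
`(uv)² = u²v² ∈ I²`. Each primary component of `I` contains `J` and lies in one of the three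
order ideals, whence `J` is their intersection.
-/

namespace Ideal

variable {R S : Type*} [CommRing R] [CommRing S]

theorem IsIntegralElement.map_of_le_comap {I : Ideal R} {J : Ideal S} (φ : R →+* S)
    (hIJ : I ≤ J.comap φ) {r : R} (hr : I.IsIntegralElement r) : J.IsIntegralElement (φ r) := by
  obtain ⟨n, hn, a, ha, heq⟩ := hr
  refine ⟨n, hn, φ ∘ a, fun i hi => ?_, by simpa using congrArg φ heq⟩
  have hpow : (I ^ i).map φ ≤ J ^ i := by
    rw [Ideal.map_pow]
    exact pow_right_mono (map_le_iff_le_comap.mpr hIJ) i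
  exact hpow (mem_map_of_mem φ (ha i hi))

theorem IsIntegralElement.mono {I J : Ideal R} (hIJ : I ≤ J) {r : R}
    (hr : I.IsIntegralElement r) : J.IsIntegralElement r :=
  hr.map_of_le_comap (RingHom.id R) hIJ

theorem IsIntegrallyClosedIdeal.comap {J : Ideal S} (hJ : J.IsIntegrallyClosedIdeal)
    (φ : R →+* S) : (J.comap φ).IsIntegrallyClosedIdeal :=
  fun r hr => hJ (φ r) (hr.map_of_le_comap φ le_rfl)

theorem IsIntegrallyClosedIdeal.inf {I J : Ideal R} (hI : I.IsIntegrallyClosedIdeal)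
    (hJ : J.IsIntegrallyClosedIdeal) : (I ⊓ J).IsIntegrallyClosedIdeal :=
  fun r hr => ⟨hI r (hr.mono inf_le_left), hJ r (hr.mono inf_le_right)⟩

theorem isIntegralElement_add_of_mem_of_sq_mem {I : Ideal R} {p h : R} (hp : p ∈ I)
    (hh : h ^ 2 ∈ I ^ 2) : I.IsIntegralElement (p + h) := by
  refine ⟨2, two_pos, fun i => if i = 1 then -(2 * p) else p ^ 2 - h ^ 2, fun i hi => ?_, ?_⟩
  · obtain rfl | rfl : i = 1 ∨ i = 2 := by simp only [Finset.mem_Icc] at hi; omega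
    · simpa using I.mul_mem_left (-2) hp
    · exact sub_mem (pow_mem_pow hp 2) hh
  · rw [show Finset.Icc 1 2 = {1, 2} from rfl, Finset.sum_pair (by decide)]
    dsimp only
    rw [if_pos rfl, if_neg (by decide)]
    ring

end Ideal

open Polynomial Finset in
theorem Polynomial.isIntegrallyClosedIdeal_span_X_pow {S : Type*} [CommRing S] [IsDomain S]
    (d : ℕ) : (Ideal.span {(X : S[X]) ^ d}).IsIntegrallyClosedIdeal := by
  rintro F ⟨n, -, a, ha, heq⟩
  rw [Ideal.mem_span_singleton]
  rcases eq_or_ne F 0 with rfl | hF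
  · exact dvd_zero _
  obtain ⟨G, hFG, hG⟩ := F.exists_eq_pow_rootMultiplicity_mul_and_not_dvd hF 0
  simp only [map_zero, sub_zero] at hFG hG
  -- With `F = X ^ m * G` and `m < d`, every other term of the equation is divisible by
  -- `X ^ (m * n + 1)`, hence so is `F ^ n = X ^ (m * n) * G ^ n`, forcing `X ∣ G`.
  set m := rootMultiplicity 0 F
  by_contra hd
  have hmd : m < d := by
    by_contra! hdm
    exact hd (hFG ▸ (pow_dvd_pow X hdm).mul_right G)
  have hterm : ∀ i ∈ Icc 1 n, X ^ (m * n + 1) ∣ a i * F ^ (n - i) := by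
    intro i hi
    obtain ⟨hi1, hin⟩ := mem_Icc.mp hi
    have hai : X ^ (d * i) ∣ a i := by
      simpa [Ideal.span_singleton_pow, Ideal.mem_span_singleton, ← pow_mul] using ha i hi
    have hFi : X ^ (m * (n - i)) ∣ F ^ (n - i) := by
      rw [hFG, mul_pow, ← pow_mul]
      exact dvd_mul_right _ _
    refine (pow_dvd_pow X ?_).trans (pow_add (X : S[X]) _ _ ▸ mul_dvd_mul hai hFi)
    obtain ⟨j, rfl⟩ := Nat.exists_eq_add_of_le hin
    rw [Nat.add_sub_cancel_left]
    nlinarith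
  have hFn : X ^ (m * n + 1) ∣ F ^ n := by
    rw [eq_neg_of_add_eq_zero_left heq]
    exact (dvd_sum hterm).neg_right
  rw [hFG, mul_pow, ← pow_mul, pow_succ, mul_dvd_mul_iff_left (pow_ne_zero _ X_ne_zero)] at hFn
  exact hG (prime_X.dvd_of_dvd_pow hFn)

namespace MvPolynomial

variable {σ R : Type*} [CommSemiring R]

noncomputable def weightScale (c : σ → ℕ) :
    MvPolynomial σ R →+* Polynomial (MvPolynomial σ R) :=
  eval₂Hom (Polynomial.C.comp C) fun i => Polynomial.X ^ c i * Polynomial.C (X i)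

theorem weightScale_X (c : σ → ℕ) (i : σ) :
    weightScale c (X i : MvPolynomial σ R) = Polynomial.X ^ c i * Polynomial.C (X i) :=
  eval₂Hom_X' _ _ _

theorem weightScale_monomial (c : σ → ℕ) (s : σ →₀ ℕ) (a : R) :
    weightScale c (monomial s a) = Polynomial.monomial (Finsupp.weight c s) (monomial s a) := by
  rw [weightScale, eval₂Hom_monomial]
  simp only [mul_pow, ← pow_mul, ← Polynomial.C_pow, Finsupp.prod_mul]
  have hX : (s.prod fun i e => (Polynomial.X : Polynomial (MvPolynomial σ R)) ^ (c i * e)) =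
      Polynomial.X ^ Finsupp.weight c s := by
    simp only [Finsupp.weight_apply, Finsupp.prod, Finsupp.sum, Finset.prod_pow_eq_pow_sum,
      smul_eq_mul, mul_comm]
  rw [hX, ← map_finsuppProd, RingHom.comp_apply, ← Polynomial.C_mul_X_pow_eq_monomial,
    monomial_eq, map_mul]
  ring

theorem coeff_weightScale (c : σ → ℕ) (j : ℕ) (f : MvPolynomial σ R) :
    (weightScale c f).coeff j = weightedHomogeneousComponent c j f := by
  induction f using MvPolynomial.induction_on' with
  | monomial s a =>
    classical
    ext t
    simp only [weightScale_monomial, Polynomial.coeff_monomial, coeff_weightedHomogeneousComponent]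
    by_cases hst : s = t
    · subst hst
      split_ifs <;> simp
    · split_ifs <;> simp [coeff_monomial, hst]
  | add p q hp hq => simp [hp, hq]

theorem le_weight_of_X_pow_dvd_weightScale {c : σ → ℕ} {d : ℕ} {f : MvPolynomial σ R}
    (h : Polynomial.X ^ d ∣ weightScale c f) {s : σ →₀ ℕ} (hs : s ∈ f.support) :
    d ≤ Finsupp.weight c s := by
  classical
  by_contra! hlt
  have h0 := congrArg (coeff s) (Polynomial.X_pow_dvd_iff.mp h _ hlt)
  rw [coeff_weightScale, coeff_weightedHomogeneousComponent, if_pos rfl, coeff_zero] at h0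
  exact mem_support_iff.mp hs h0

end MvPolynomial

noncomputable section

namespace BinomialExample

open MvPolynomial

variable {k : Type*} [CommRing k]

def I : Ideal (MvPolynomial (Fin 4) k) :=
  Ideal.span {X 0 ^ 2 - X 0 * X 1, -(X 0 * X 1) + X 1 ^ 2, X 2 ^ 2 - X 2 * X 3,
    -(X 2 * X 3) + X 3 ^ 2}

def J : Ideal (MvPolynomial (Fin 4) k) :=
  Ideal.span {X 0 ^ 2 - X 0 * X 1, -(X 0 * X 1) + X 1 ^ 2, X 2 ^ 2 - X 2 * X 3,
    -(X 2 * X 3) + X 3 ^ 2, X 0 * X 2 - X 1 * X 2 - X 0 * X 3 + X 1 * X 3}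

/-- `shear f` is `f` written in the coordinates `x - y, y, z - w, w`. -/
def shear : MvPolynomial (Fin 4) k →ₐ[k] MvPolynomial (Fin 4) k :=
  aeval ![X 0 + X 1, X 1, X 2 + X 3, X 3]

def unshear : MvPolynomial (Fin 4) k →ₐ[k] MvPolynomial (Fin 4) k :=
  aeval ![X 0 - X 1, X 1, X 2 - X 3, X 3]

theorem unshear_shear (f : MvPolynomial (Fin 4) k) : unshear (shear f) = f := by
  rw [← AlgHom.comp_apply, show unshear.comp shear = AlgHom.id k _ from
    algHom_ext fun i => by fin_cases i <;> simp [shear, unshear]]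
  rfl

/-- The polynomials all of whose monomials in the coordinates of `shear` have `c`-weight at
least `d` (see `le_weight_of_X_pow_dvd_weightScale`). -/
def ordIdeal (c : Fin 4 → ℕ) (d : ℕ) : Ideal (MvPolynomial (Fin 4) k) :=
  (Ideal.span {Polynomial.X ^ d}).comap ((weightScale c).comp shear.toRingHom)

theorem mem_ordIdeal {c : Fin 4 → ℕ} {d : ℕ} {f : MvPolynomial (Fin 4) k} :
    f ∈ ordIdeal c d ↔ Polynomial.X ^ d ∣ weightScale c (shear f) :=
  Ideal.mem_span_singleton

theorem isIntegrallyClosedIdeal_ordIdeal [IsDomain k] (c : Fin 4 → ℕ) (d : ℕ) :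
    (ordIdeal (k := k) c d).IsIntegrallyClosedIdeal :=
  (Polynomial.isIntegrallyClosedIdeal_span_X_pow d).comap _

theorem ordIdeal_antitone (c : Fin 4 → ℕ) : Antitone (ordIdeal (k := k) c) :=
  fun _ _ h _ hf => mem_ordIdeal.mpr ((pow_dvd_pow _ h).trans (mem_ordIdeal.mp hf))

theorem mul_mem_ordIdeal {c : Fin 4 → ℕ} {a b d : ℕ} {f g : MvPolynomial (Fin 4) k}
    (hf : f ∈ ordIdeal c a) (hg : g ∈ ordIdeal c b) (hd : d ≤ a + b) :
    f * g ∈ ordIdeal c d := by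
  refine ordIdeal_antitone c hd (mem_ordIdeal.mpr ?_)
  rw [map_mul, map_mul, pow_add]
  exact mul_dvd_mul (mem_ordIdeal.mp hf) (mem_ordIdeal.mp hg)

section Generators

variable (c : Fin 4 → ℕ)

theorem X_zero_mem_ordIdeal : X 0 ∈ ordIdeal (k := k) c (min (c 0) (c 1)) := by
  simp only [mem_ordIdeal, shear, aeval_X, Matrix.cons_val, map_add, weightScale_X]
  exact dvd_add ((pow_dvd_pow _ (min_le_left _ _)).mul_right _)
    ((pow_dvd_pow _ (min_le_right _ _)).mul_right _)

theorem X_one_mem_ordIdeal : X 1 ∈ ordIdeal (k := k) c (c 1) := by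
  simp only [mem_ordIdeal, shear, aeval_X, Matrix.cons_val, weightScale_X]
  exact dvd_mul_right _ _

theorem X_two_mem_ordIdeal : X 2 ∈ ordIdeal (k := k) c (min (c 2) (c 3)) := by
  simp only [mem_ordIdeal, shear, aeval_X, Matrix.cons_val, map_add, weightScale_X]
  exact dvd_add ((pow_dvd_pow _ (min_le_left _ _)).mul_right _)
    ((pow_dvd_pow _ (min_le_right _ _)).mul_right _)

theorem X_three_mem_ordIdeal : X 3 ∈ ordIdeal (k := k) c (c 3) := by
  simp only [mem_ordIdeal, shear, aeval_X, Matrix.cons_val, weightScale_X]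
  exact dvd_mul_right _ _

theorem X_zero_sub_X_one_mem_ordIdeal : X 0 - X 1 ∈ ordIdeal (k := k) c (c 0) := by
  simp only [mem_ordIdeal, shear, map_sub, aeval_X, Matrix.cons_val, add_sub_cancel_right,
    weightScale_X]
  exact dvd_mul_right _ _

theorem X_two_sub_X_three_mem_ordIdeal : X 2 - X 3 ∈ ordIdeal (k := k) c (c 2) := by
  simp only [mem_ordIdeal, shear, map_sub, aeval_X, Matrix.cons_val, add_sub_cancel_right,
    weightScale_X]
  exact dvd_mul_right _ _

end Generators

theorem I_le_ordIdeal {c : Fin 4 → ℕ} {d : ℕ} (h₁ : d ≤ min (c 0) (c 1) + c 0)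
    (h₂ : d ≤ c 1 + c 0) (h₃ : d ≤ min (c 2) (c 3) + c 2) (h₄ : d ≤ c 3 + c 2) :
    I ≤ ordIdeal (k := k) c d := by
  simp only [I, Ideal.span_le, Set.insert_subset_iff, Set.singleton_subset_iff, SetLike.mem_coe]
  refine ⟨?_, ?_, ?_, ?_⟩
  · rw [show (X 0 ^ 2 - X 0 * X 1 : MvPolynomial (Fin 4) k) = X 0 * (X 0 - X 1) by ring]
    exact mul_mem_ordIdeal (X_zero_mem_ordIdeal c) (X_zero_sub_X_one_mem_ordIdeal c) h₁
  · rw [show (-(X 0 * X 1) + X 1 ^ 2 : MvPolynomial (Fin 4) k) = -(X 1 * (X 0 - X 1)) by ring]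
    exact neg_mem (mul_mem_ordIdeal (X_one_mem_ordIdeal c) (X_zero_sub_X_one_mem_ordIdeal c) h₂)
  · rw [show (X 2 ^ 2 - X 2 * X 3 : MvPolynomial (Fin 4) k) = X 2 * (X 2 - X 3) by ring]
    exact mul_mem_ordIdeal (X_two_mem_ordIdeal c) (X_two_sub_X_three_mem_ordIdeal c) h₃
  · rw [show (-(X 2 * X 3) + X 3 ^ 2 : MvPolynomial (Fin 4) k) = -(X 3 * (X 2 - X 3)) by ring]
    exact neg_mem
      (mul_mem_ordIdeal (X_three_mem_ordIdeal c) (X_two_sub_X_three_mem_ordIdeal c) h₄)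

theorem span_le_ordIdeal_one :
    Ideal.span {X 0 - X 1, X 2 - X 3} ≤ ordIdeal (k := k) ![1, 0, 1, 0] 1 := by
  simp only [Ideal.span_le, Set.insert_subset_iff, Set.singleton_subset_iff, SetLike.mem_coe]
  exact ⟨X_zero_sub_X_one_mem_ordIdeal _, X_two_sub_X_three_mem_ordIdeal _⟩

theorem span_le_ordIdeal_two :
    Ideal.span {X 0 - X 1, X 2 ^ 2, X 2 * X 3, X 3 ^ 2} ≤ ordIdeal (k := k) ![2, 0, 1, 1] 2 := by
  simp only [Ideal.span_le, Set.insert_subset_iff, Set.singleton_subset_iff, SetLike.mem_coe, sq]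
  exact ⟨X_zero_sub_X_one_mem_ordIdeal _,
    mul_mem_ordIdeal (X_two_mem_ordIdeal _) (X_two_mem_ordIdeal _) (by decide),
    mul_mem_ordIdeal (X_two_mem_ordIdeal _) (X_three_mem_ordIdeal _) (by decide),
    mul_mem_ordIdeal (X_three_mem_ordIdeal _) (X_three_mem_ordIdeal _) (by decide)⟩

theorem span_le_ordIdeal_three :
    Ideal.span {X 2 - X 3, X 0 ^ 2, X 0 * X 1, X 1 ^ 2} ≤ ordIdeal (k := k) ![1, 1, 2, 0] 2 := by
  simp only [Ideal.span_le, Set.insert_subset_iff, Set.singleton_subset_iff, SetLike.mem_coe, sq]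
  exact ⟨X_two_sub_X_three_mem_ordIdeal _,
    mul_mem_ordIdeal (X_zero_mem_ordIdeal _) (X_zero_mem_ordIdeal _) (by decide),
    mul_mem_ordIdeal (X_zero_mem_ordIdeal _) (X_one_mem_ordIdeal _) (by decide),
    mul_mem_ordIdeal (X_one_mem_ordIdeal _) (X_one_mem_ordIdeal _) (by decide)⟩

open Finsupp in
theorem exists_le_of_le_weight {s : Fin 4 →₀ ℕ} (h₁ : 1 ≤ weight ![1, 0, 1, 0] s)
    (h₂ : 2 ≤ weight ![2, 0, 1, 1] s) (h₃ : 2 ≤ weight ![1, 1, 2, 0] s) :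
    ∃ t ∈ ({single 0 2, single 0 1 + single 1 1, single 2 2, single 2 1 + single 3 1,
      single 0 1 + single 2 1} : Set (Fin 4 →₀ ℕ)), t ≤ s := by
  simp only [weight_apply, smul_eq_mul, zero_mul, implies_true, sum_fintype, Fin.sum_univ_four,
    Matrix.cons_val] at h₁ h₂ h₃
  simp only [Set.mem_insert_iff, Set.mem_singleton_iff, exists_eq_or_imp, exists_eq_left, le_def,
    Fin.forall_fin_succ, IsEmpty.forall_iff, Finsupp.coe_add, Pi.add_apply, single_apply,
    Fin.succ_zero_eq_one, Fin.succ_one_eq_two, Fin.reduceSucc, Fin.reduceEq, if_true, if_false,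
    add_zero, zero_add, zero_le, and_true, true_and]
  omega

theorem ordIdeal_inf_le_J :
    ordIdeal ![1, 0, 1, 0] 1 ⊓ ordIdeal ![2, 0, 1, 1] 2 ⊓ ordIdeal ![1, 1, 2, 0] 2 ≤
      J (k := k) := by
  rintro f ⟨⟨h₁, h₂⟩, h₃⟩
  have hmon : shear f ∈ Ideal.span ((fun s => monomial s (1 : k)) ''
      {Finsupp.single 0 2, Finsupp.single 0 1 + Finsupp.single 1 1, Finsupp.single 2 2,
        Finsupp.single 2 1 + Finsupp.single 3 1, Finsupp.single 0 1 + Finsupp.single 2 1}) :=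
    mem_ideal_span_monomial_image.mpr fun s hs => exists_le_of_le_weight
      (le_weight_of_X_pow_dvd_weightScale (mem_ordIdeal.mp h₁) hs)
      (le_weight_of_X_pow_dvd_weightScale (mem_ordIdeal.mp h₂) hs)
      (le_weight_of_X_pow_dvd_weightScale (mem_ordIdeal.mp h₃) hs)
  rw [← unshear_shear f]
  refine Ideal.map_le_iff_le_comap.mpr ?_ (Ideal.mem_map_of_mem unshear hmon)
  simp only [Set.image_insert_eq, Set.image_singleton, ← X_pow_eq_monomial, monomial_single_add,
    pow_one, Ideal.span_le, Set.insert_subset_iff, Set.singleton_subset_iff, SetLike.mem_coe,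
    Ideal.mem_comap, map_pow, map_mul, unshear, aeval_X, Matrix.cons_val]
  have hgen : ∀ g ∈ ({X 0 ^ 2 - X 0 * X 1, -(X 0 * X 1) + X 1 ^ 2, X 2 ^ 2 - X 2 * X 3,
      -(X 2 * X 3) + X 3 ^ 2, X 0 * X 2 - X 1 * X 2 - X 0 * X 3 + X 1 * X 3} :
      Set (MvPolynomial (Fin 4) k)), g ∈ J := fun g hg => Ideal.subset_span hg
  refine ⟨?_, ?_, ?_, ?_, ?_⟩
  · rw [show (X 0 - X 1 : MvPolynomial (Fin 4) k) ^ 2 =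
      (X 0 ^ 2 - X 0 * X 1) + (-(X 0 * X 1) + X 1 ^ 2) by ring]
    exact add_mem (hgen _ (by simp)) (hgen _ (by simp))
  · rw [show (X 0 - X 1 : MvPolynomial (Fin 4) k) * X 1 = -(-(X 0 * X 1) + X 1 ^ 2) by ring]
    exact neg_mem (hgen _ (by simp))
  · rw [show (X 2 - X 3 : MvPolynomial (Fin 4) k) ^ 2 =
      (X 2 ^ 2 - X 2 * X 3) + (-(X 2 * X 3) + X 3 ^ 2) by ring]
    exact add_mem (hgen _ (by simp)) (hgen _ (by simp))
  · rw [show (X 2 - X 3 : MvPolynomial (Fin 4) k) * X 3 = -(-(X 2 * X 3) + X 3 ^ 2) by ring]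
    exact neg_mem (hgen _ (by simp))
  · rw [show (X 0 - X 1 : MvPolynomial (Fin 4) k) * (X 2 - X 3) =
      X 0 * X 2 - X 1 * X 2 - X 0 * X 3 + X 1 * X 3 by ring]
    exact hgen _ (by simp)

theorem J_le_span_one :
    J (k := k) ≤ Ideal.span {X 0 - X 1, X 2 - X 3} := by
  simp only [J, Ideal.span_le, Set.insert_subset_iff, Set.singleton_subset_iff, SetLike.mem_coe,
    Ideal.mem_span_pair]
  exact ⟨⟨X 0, 0, by ring⟩, ⟨-X 1, 0, by ring⟩, ⟨0, X 2, by ring⟩,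
    ⟨0, -X 3, by ring⟩,
    ⟨X 2 - X 3, 0, by ring⟩⟩

theorem J_le_span_two :
    J (k := k) ≤ Ideal.span {X 0 - X 1, X 2 ^ 2, X 2 * X 3, X 3 ^ 2} := by
  have hgen : ∀ g ∈ ({X 2 ^ 2, X 2 * X 3, X 3 ^ 2} : Set (MvPolynomial (Fin 4) k)),
      g ∈ Ideal.span {X 0 - X 1, X 2 ^ 2, X 2 * X 3, X 3 ^ 2} :=
    fun g hg => Ideal.subset_span (Set.mem_insert_of_mem _ hg)
  simp only [J, Ideal.span_le, Set.insert_subset_iff, Set.singleton_subset_iff, SetLike.mem_coe]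
  exact ⟨Ideal.mem_span_insert.mpr ⟨X 0, 0, zero_mem _, by ring⟩,
    Ideal.mem_span_insert.mpr ⟨-X 1, 0, zero_mem _, by ring⟩,
    sub_mem (hgen _ (by simp)) (hgen _ (by simp)),
    add_mem (neg_mem (hgen _ (by simp))) (hgen _ (by simp)),
    Ideal.mem_span_insert.mpr ⟨X 2 - X 3, 0, zero_mem _, by ring⟩⟩

theorem J_le_span_three :
    J (k := k) ≤ Ideal.span {X 2 - X 3, X 0 ^ 2, X 0 * X 1, X 1 ^ 2} := by
  have hgen : ∀ g ∈ ({X 0 ^ 2, X 0 * X 1, X 1 ^ 2} : Set (MvPolynomial (Fin 4) k)),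
      g ∈ Ideal.span {X 2 - X 3, X 0 ^ 2, X 0 * X 1, X 1 ^ 2} :=
    fun g hg => Ideal.subset_span (Set.mem_insert_of_mem _ hg)
  simp only [J, Ideal.span_le, Set.insert_subset_iff, Set.singleton_subset_iff, SetLike.mem_coe]
  exact ⟨sub_mem (hgen _ (by simp)) (hgen _ (by simp)),
    add_mem (neg_mem (hgen _ (by simp))) (hgen _ (by simp)),
    Ideal.mem_span_insert.mpr ⟨X 2, 0, zero_mem _, by ring⟩,
    Ideal.mem_span_insert.mpr ⟨-X 3, 0, zero_mem _, by ring⟩,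
    Ideal.mem_span_insert.mpr ⟨X 0 - X 1, 0, zero_mem _, by ring⟩⟩

theorem J_eq_I_sup :
    J (k := k) = I ⊔ Ideal.span {X 0 * X 2 - X 1 * X 2 - X 0 * X 3 + X 1 * X 3} := by
  rw [I, J, ← Ideal.span_union]
  simp only [Set.insert_union, Set.singleton_union]

theorem sq_mem_I_sq {h : MvPolynomial (Fin 4) k}
    (hh : h ∈ Ideal.span {X 0 * X 2 - X 1 * X 2 - X 0 * X 3 + X 1 * X 3}) : h ^ 2 ∈ I ^ 2 := by
  obtain ⟨q, rfl⟩ := Ideal.mem_span_singleton'.mp hh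
  have hgen : ∀ g ∈ ({X 0 ^ 2 - X 0 * X 1, -(X 0 * X 1) + X 1 ^ 2, X 2 ^ 2 - X 2 * X 3,
      -(X 2 * X 3) + X 3 ^ 2} : Set (MvPolynomial (Fin 4) k)), g ∈ I := fun g hg =>
    Ideal.subset_span hg
  have hx : (X 0 - X 1) ^ 2 ∈ I (k := k) := by
    convert add_mem (hgen (X 0 ^ 2 - X 0 * X 1) (by simp))
      (hgen (-(X 0 * X 1) + X 1 ^ 2) (by simp)) using 1
    ring
  have hz : (X 2 - X 3) ^ 2 ∈ I (k := k) := by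
    convert add_mem (hgen (X 2 ^ 2 - X 2 * X 3) (by simp))
      (hgen (-(X 2 * X 3) + X 3 ^ 2) (by simp)) using 1
    ring
  rw [sq I]
  convert Ideal.mul_mem_left _ (q ^ 2) (Ideal.mul_mem_mul hx hz) using 1
  ring

theorem isIntegralElement_of_mem_J {r : MvPolynomial (Fin 4) k} (hr : r ∈ J) :
    I.IsIntegralElement r := by
  rw [J_eq_I_sup, Submodule.mem_sup] at hr
  obtain ⟨p, hp, h, hh, rfl⟩ := hr
  exact Ideal.isIntegralElement_add_of_mem_of_sq_mem hp (sq_mem_I_sq hh)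

theorem isIntegralElement_I_iff [IsDomain k] {r : MvPolynomial (Fin 4) k} :
    I.IsIntegralElement r ↔ r ∈ J := by
  have hclosed := ((isIntegrallyClosedIdeal_ordIdeal (k := k) ![1, 0, 1, 0] 1).inf
    (isIntegrallyClosedIdeal_ordIdeal ![2, 0, 1, 1] 2)).inf
    (isIntegrallyClosedIdeal_ordIdeal ![1, 1, 2, 0] 2)
  have hI : I (k := k) ≤
      ordIdeal ![1, 0, 1, 0] 1 ⊓ ordIdeal ![2, 0, 1, 1] 2 ⊓ ordIdeal ![1, 1, 2, 0] 2 :=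
    le_inf (le_inf (I_le_ordIdeal (by decide) (by decide) (by decide) (by decide))
      (I_le_ordIdeal (by decide) (by decide) (by decide) (by decide)))
      (I_le_ordIdeal (by decide) (by decide) (by decide) (by decide))
  exact ⟨fun hr => ordIdeal_inf_le_J (hclosed r (hr.mono hI)), isIntegralElement_of_mem_J⟩

theorem J_eq_inf :
    J (k := k) = Ideal.span {X 0 - X 1, X 2 - X 3} ⊓
      Ideal.span {X 0 - X 1, X 2 ^ 2, X 2 * X 3, X 3 ^ 2} ⊓
      Ideal.span {X 2 - X 3, X 0 ^ 2, X 0 * X 1, X 1 ^ 2} :=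
  le_antisymm (le_inf (le_inf J_le_span_one J_le_span_two) J_le_span_three)
    ((inf_le_inf (inf_le_inf span_le_ordIdeal_one span_le_ordIdeal_two)
      span_le_ordIdeal_three).trans ordIdeal_inf_le_J)

end BinomialExample

end

theorem integral_closure_of_binomial_ideal_not_binomial_general
    {k : Type*} [Field k]
    (x y z w : MvPolynomial (Fin 4) k)
    (hx : x = MvPolynomial.X 0) (hy : y = MvPolynomial.X 1)
    (hz : z = MvPolynomial.X 2) (hw : w = MvPolynomial.X 3)
    (I : Ideal (MvPolynomial (Fin 4) k))
    (hI : I = Ideal.span {x ^ 2 - x * y, -(x * y) + y ^ 2, z ^ 2 - z * w, -(z * w) + w ^ 2}) :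
    {r | I.IsIntegralElement r} =
      (Ideal.span {x ^ 2 - x * y, -(x * y) + y ^ 2, z ^ 2 - z * w, -(z * w) + w ^ 2,
          x * z - y * z - x * w + y * w} : Set (MvPolynomial (Fin 4) k)) ∧
      Ideal.span {x ^ 2 - x * y, -(x * y) + y ^ 2, z ^ 2 - z * w, -(z * w) + w ^ 2,
          x * z - y * z - x * w + y * w} =
        Ideal.span {x - y, z - w} ⊓
          Ideal.span {x - y, z ^ 2, z * w, w ^ 2} ⊓
          Ideal.span {z - w, x ^ 2, x * y, y ^ 2} := by
  subst hx hy hz hw hI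
  exact ⟨Set.ext fun _ => BinomialExample.isIntegralElement_I_iff, BinomialExample.J_eq_inf⟩

/-- **Example 4.7.** In `R = k[x, y, z, w]` with `char k = 0` and
`I = (x² − x y, −x y + y², z² − z w, −z w + w²)`, the integral closure of `I` is
`(x² − x y, −x y + y², z² − z w, −z w + w², x z − y z − x w + y w)`, which equals the
intersection of the three height-two primary components of `I`. -/
theorem integral_closure_of_binomial_ideal_not_binomial
    {k : Type*} [Field k] [CharZero k]
    (x y z w : MvPolynomial (Fin 4) k)
    (hx : x = MvPolynomial.X 0) (hy : y = MvPolynomial.X 1)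
    (hz : z = MvPolynomial.X 2) (hw : w = MvPolynomial.X 3)
    (I : Ideal (MvPolynomial (Fin 4) k))
    (hI : I = Ideal.span {x ^ 2 - x * y, -(x * y) + y ^ 2, z ^ 2 - z * w, -(z * w) + w ^ 2}) :
    {r | I.IsIntegralElement r} =
      (Ideal.span {x ^ 2 - x * y, -(x * y) + y ^ 2, z ^ 2 - z * w, -(z * w) + w ^ 2,
          x * z - y * z - x * w + y * w} : Set (MvPolynomial (Fin 4) k)) ∧
      Ideal.span {x ^ 2 - x * y, -(x * y) + y ^ 2, z ^ 2 - z * w, -(z * w) + w ^ 2,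
          x * z - y * z - x * w + y * w} =
        Ideal.span {x - y, z - w} ⊓
          Ideal.span {x - y, z ^ 2, z * w, w ^ 2} ⊓
          Ideal.span {z - w, x ^ 2, x * y, y ^ 2} :=
  integral_closure_of_binomial_ideal_not_binomial_general x y z w hx hy hz hw I hI
end
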